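/- arXiv:2205.00457 — 7 statements merged into one kernel-verified Lean document; each statement's English description precedes it below -/
import Mathlib

section
/- Let D be a finite loopless digraph with N vertices and M arcs, with rates β_e > 0 and δ_v > 0, and write A(D) = {e₁, …, e_{M₀}} ∪ {f₁, …, f_{M₁}, f₁⁻¹, …, f_{M₁}⁻¹}, where e_j⁻¹ ∉ A(D) for 1 ≤ j ≤ M₀ and both f_k, f_k⁻¹ ∈ A(D) for 1 ≤ k ≤ M₁ (so M = M₀ + 2M₁). Then for every real u, det(I_M + u(J B′ + E)) = ∏_{j=1}^{M₀} (1 + γ_{e_j} u) · ∏_{k=1}^{M₁} G_k, where γ_e = β_e + δ_{o(e)} + δ_{t(e)} and G_k = (1 + γ_{f_k} u)(1 + γ_{f_k⁻¹} u) − β_{f_k} β_{f_k⁻¹} u². -/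
open Matrix BigOperators

/-- The reversal (inverse) of an arc. -/
def arcRev {V : Type*} (e : V × V) : V × V := (e.2, e.1)

/-- For a finite loopless digraph with rates `β`, `δ`, writing the arc set
as the disjoint union of the arcs `e` with `e⁻¹ ∉ A` and pairs `{f, f⁻¹} ⊆ A`
(`P` being a set of representatives of the pairs), for every real `u`,
`det(I + u(J B′ + E)) = ∏_{e⁻¹ ∉ A} (1 + γ_e u) · ∏_{pairs} G_f`, where
`γ_e = β_e + δ_{o(e)} + δ_{t(e)}` and
`G_f = (1 + γ_f u)(1 + γ_{f⁻¹} u) − β_f β_{f⁻¹} u²`. -/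
theorem det_one_add_smul_JB_add_E
    {V : Type*} [Fintype V] [DecidableEq V]
    (A : Finset (V × V)) (hloopless : ∀ e ∈ A, e.1 ≠ e.2)
    (β : V × V → ℝ) (δ : V → ℝ)
    (hβ : ∀ e ∈ A, 0 < β e) (hδ : ∀ v : V, 0 < δ v)
    (γ : V × V → ℝ) (hγ : ∀ e : V × V, γ e = β e + δ e.1 + δ e.2)
    (B' D1 D2 E : Matrix {e : V × V // e ∈ A} {e : V × V // e ∈ A} ℝ)
    (hB' : B' = Matrix.diagonal fun e => β e.val)
    (hD1 : D1 = Matrix.diagonal fun e => δ e.val.1)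
    (hD2 : D2 = Matrix.diagonal fun e => δ e.val.2)
    (hE : E = B' + D1 + D2)
    (J : Matrix {e : V × V // e ∈ A} {e : V × V // e ∈ A} ℝ)
    (hJ : ∀ e f : {e : V × V // e ∈ A},
      J e f = if f.val = arcRev e.val then 1 else 0)
    -- `P` is a set of representatives of the unordered pairs `{f, f⁻¹} ⊆ A`
    (P : Finset (V × V)) (hPsub : P ⊆ A) (hPrev : ∀ e ∈ P, arcRev e ∈ A)
    (hPdisj : ∀ e ∈ P, arcRev e ∉ P)
    (hPcover : ∀ e ∈ A, arcRev e ∈ A → e ∈ P ∨ arcRev e ∈ P)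
    (u : ℝ) :
    (1 + u • (J * B' + E)).det
      = (∏ e ∈ A.filter (fun e => arcRev e ∉ A), (1 + γ e * u)) *
        ∏ e ∈ P, ((1 + γ e * u) * (1 + γ (arcRev e) * u) - β e * β (arcRev e) * u ^ 2) := by
  classical
  have hrevrev : ∀ a : V × V, arcRev (arcRev a) = a := fun a => rfl
  have hrevinj : Function.Injective (arcRev (V := V)) := fun a b h => by
    rw [← hrevrev a, h, hrevrev]
  have hne : ∀ a ∈ A, a ≠ arcRev a := by
    intro a ha h
    exact hloopless a ha (congrArg Prod.fst h)
  set F : Finset (V × V) := A.filter (fun e => arcRev e ∉ A) with hFdef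
  set M : Matrix {e : V × V // e ∈ A} {e : V × V // e ∈ A} ℝ := 1 + u • (J * B' + E) with hM
  -- entrywise description of M
  have hMentry : ∀ e f : {e : V × V // e ∈ A},
      M e f =
        if e = f then 1 + γ e.val * u
        else if f.val = arcRev e.val then u * β f.val else 0 := by
    intro e f
    have hJB : (J * B') e f = if f.val = arcRev e.val then β f.val else 0 := by
      rw [hB', Matrix.mul_diagonal, hJ]
      by_cases h : f.val = arcRev e.val <;> simp [h]
    have hEef : E e f = if e = f then γ e.val else 0 := by
      by_cases h : e = f
      · subst h
        simp [hE, hB', hD1, hD2, Matrix.add_apply, hγ]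
      · simp [hE, hB', hD1, hD2, Matrix.add_apply, Matrix.diagonal_apply_ne _ h, h]
    rw [hM, Matrix.add_apply, Matrix.smul_apply, Matrix.add_apply, hJB, hEef,
      Matrix.one_apply]
    by_cases h : e = f
    · subst h
      have h2 : ¬ e.val = arcRev e.val := hne e.val e.property
      simp only [eq_self_iff_true, if_true, h2, if_false, smul_eq_mul]
      ring
    · by_cases h2 : f.val = arcRev e.val <;> simp [h, h2]
  have hMdiag : ∀ a : {e : V × V // e ∈ A}, M a a = 1 + γ a.val * u := by
    intro a; rw [hMentry]; simp
  have hM0 : ∀ a b : {e : V × V // e ∈ A},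
      a.val ≠ b.val → b.val ≠ arcRev a.val → M a b = 0 := by
    intro a b h1 h2
    rw [hMentry, if_neg (fun h => h1 (congrArg Subtype.val h)), if_neg h2]
  have hMoff : ∀ a b : {e : V × V // e ∈ A},
      b.val = arcRev a.val → M a b = u * β b.val := by
    intro a b h
    have hab : a ≠ b := by
      intro hh
      exact hne a.val a.property (by rw [← h, hh])
    rw [hMentry, if_neg hab, if_pos h]
  have hFmem : ∀ e : {e : V × V // e ∈ F}, arcRev e.val ∉ A := by
    intro e
    exact (Finset.mem_filter.mp e.property).2
  -- the index bijection
  let φ : ({e : V × V // e ∈ F} ⊕ (Fin 2 × {p : V × V // p ∈ P})) → {e : V × V // e ∈ A} :=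
    Sum.elim (fun e => ⟨e.val, (Finset.mem_filter.mp e.property).1⟩)
      (fun x => if x.1 = 0 then ⟨x.2.val, hPsub x.2.property⟩
                else ⟨arcRev x.2.val, hPrev _ x.2.property⟩)
  have hφinj : Function.Injective φ := by
    rintro (e | ⟨i, p⟩) (f | ⟨j, q⟩) h
    · simp only [φ, Sum.elim_inl, Subtype.mk.injEq] at h
      exact congrArg Sum.inl (Subtype.ext h)
    · exfalso
      fin_cases j <;> simp [φ, Subtype.ext_iff] at h
      · exact hFmem e (h ▸ hPrev _ q.property)
      · exact hFmem e (by rw [h, hrevrev]; exact hPsub q.property)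
    · exfalso
      fin_cases i <;> simp [φ, Subtype.ext_iff] at h
      · exact hFmem f (h ▸ hPrev _ p.property)
      · exact hFmem f (by rw [← h, hrevrev]; exact hPsub p.property)
    · fin_cases i <;> fin_cases j <;> simp [φ, Subtype.ext_iff, -SetLike.coe_eq_coe] at h
      · exact congrArg Sum.inr (by rw [Prod.ext_iff]; exact ⟨rfl, Subtype.ext h⟩)
      · exact absurd (h ▸ p.property) (hPdisj q.val q.property)
      · exact absurd (h ▸ q.property) (hPdisj p.val p.property)
      · exact congrArg Sum.inr (by rw [Prod.ext_iff]; exact ⟨rfl, Subtype.ext (hrevinj h)⟩)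
  have hφsurj : Function.Surjective φ := by
    rintro ⟨a, ha⟩
    by_cases hra : arcRev a ∈ A
    · rcases hPcover a ha hra with hp | hp
      · exact ⟨Sum.inr (0, ⟨a, hp⟩), rfl⟩
      · refine ⟨Sum.inr (1, ⟨arcRev a, hp⟩), ?_⟩
        exact Subtype.ext (by simp [φ, hrevrev])
    · exact ⟨Sum.inl ⟨a, Finset.mem_filter.mpr ⟨ha, hra⟩⟩, rfl⟩
  let σ : ({e : V × V // e ∈ F} ⊕ (Fin 2 × {p : V × V // p ∈ P})) ≃ {e : V × V // e ∈ A} :=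
    Equiv.ofBijective φ ⟨hφinj, hφsurj⟩
  have hσ : ∀ x, σ x = φ x := fun x => rfl
  -- the 2×2 blocks
  let K : {p : V × V // p ∈ P} → Matrix (Fin 2) (Fin 2) ℝ :=
    fun p => !![1 + γ p.val * u, u * β (arcRev p.val); u * β p.val, 1 + γ (arcRev p.val) * u]
  have hM0' : ∀ (a b : V × V) (ha : a ∈ A) (hb : b ∈ A),
      a ≠ b → b ≠ arcRev a → M ⟨a, ha⟩ ⟨b, hb⟩ = 0 :=
    fun a b ha hb h1 h2 => hM0 ⟨a, ha⟩ ⟨b, hb⟩ h1 h2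
  have hMdiag' : ∀ (a : V × V) (h1 h2 : a ∈ A), M ⟨a, h1⟩ ⟨a, h2⟩ = 1 + γ a * u :=
    fun a h1 h2 => hMdiag ⟨a, h1⟩
  have hMoff' : ∀ (a b : V × V) (ha : a ∈ A) (hb : b ∈ A),
      b = arcRev a → M ⟨a, ha⟩ ⟨b, hb⟩ = u * β b :=
    fun a b ha hb h => hMoff ⟨a, ha⟩ ⟨b, hb⟩ h
  have hsub : M.submatrix σ σ =
      Matrix.fromBlocks (Matrix.diagonal fun e : {e : V × V // e ∈ F} => 1 + γ e.val * u) 0 0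
        (Matrix.blockDiagonal K) := by
    ext x y
    rw [Matrix.submatrix_apply]
    obtain e | ⟨i, p⟩ := x <;> obtain f | ⟨j, q⟩ := y
    · rw [hσ, hσ, Matrix.fromBlocks_apply₁₁]
      show M ⟨e.val, _⟩ ⟨f.val, _⟩ = Matrix.diagonal (fun e : {e : V × V // e ∈ F} => 1 + γ e.val * u) e f
      by_cases h : e = f
      · subst h
        rw [Matrix.diagonal_apply_eq, hMdiag']
      · rw [Matrix.diagonal_apply_ne _ h]
        refine hM0' _ _ _ _ (fun hh => h (Subtype.ext hh)) (fun hh => ?_)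
        exact hFmem e (by rw [← hh]; exact (Finset.mem_filter.mp f.property).1)
    · rw [hσ, hσ, Matrix.fromBlocks_apply₁₂, Matrix.zero_apply]
      fin_cases j
      · show M ⟨e.val, _⟩ ⟨q.val, _⟩ = 0
        refine hM0' _ _ _ _ (fun hh => ?_) (fun hh => ?_)
        · exact hFmem e (by rw [hh]; exact hPrev _ q.property)
        · exact hFmem e (by rw [← hh]; exact hPsub q.property)
      · show M ⟨e.val, _⟩ ⟨arcRev q.val, _⟩ = 0
        refine hM0' _ _ _ _ (fun hh => ?_) (fun hh => ?_)
        · exact hFmem e (by rw [hh, hrevrev]; exact hPsub q.property)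
        · exact hFmem e (by rw [← hrevinj hh]; exact hPrev _ q.property)
    · rw [hσ, hσ, Matrix.fromBlocks_apply₂₁, Matrix.zero_apply]
      fin_cases i
      · show M ⟨p.val, _⟩ ⟨f.val, _⟩ = 0
        refine hM0' _ _ _ _ (fun hh => ?_) (fun hh => ?_)
        · exact hFmem f (by rw [← hh]; exact hPrev _ p.property)
        · exact hFmem f (by rw [hh, hrevrev]; exact hPsub p.property)
      · show M ⟨arcRev p.val, _⟩ ⟨f.val, _⟩ = 0
        refine hM0' _ _ _ _ (fun hh => ?_) (fun hh => ?_)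
        · exact hFmem f (by rw [← hh, hrevrev]; exact hPsub p.property)
        · exact hFmem f (by rw [hh, hrevrev]; exact hPrev _ p.property)
    · rw [hσ, hσ, Matrix.fromBlocks_apply₂₂, Matrix.blockDiagonal_apply]
      by_cases hpq : p = q
      · subst hpq
        rw [if_pos rfl]
        fin_cases i <;> fin_cases j
        · show M ⟨p.val, _⟩ ⟨p.val, _⟩ = K p 0 0
          rw [hMdiag']
          simp [K]
        · show M ⟨p.val, _⟩ ⟨arcRev p.val, _⟩ = K p 0 1
          rw [hMoff' _ _ _ _ rfl]
          simp [K]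
        · show M ⟨arcRev p.val, _⟩ ⟨p.val, _⟩ = K p 1 0
          rw [hMoff' _ _ _ _ (hrevrev p.val).symm]
          simp [K]
        · show M ⟨arcRev p.val, _⟩ ⟨arcRev p.val, _⟩ = K p 1 1
          rw [hMdiag']
          simp [K]
      · rw [if_neg hpq]
        have hpq' : p.val ≠ q.val := fun hh => hpq (Subtype.ext hh)
        fin_cases i <;> fin_cases j
        · show M ⟨p.val, _⟩ ⟨q.val, _⟩ = 0
          refine hM0' _ _ _ _ hpq' (fun hh => ?_)
          exact hPdisj p.val p.property (by rw [← hh]; exact q.property)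
        · show M ⟨p.val, _⟩ ⟨arcRev q.val, _⟩ = 0
          refine hM0' _ _ _ _ (fun hh => ?_)
            (fun hh => hpq (Subtype.ext (hrevinj hh)).symm)
          exact hPdisj q.val q.property (by rw [← hh]; exact p.property)
        · show M ⟨arcRev p.val, _⟩ ⟨q.val, _⟩ = 0
          refine hM0' _ _ _ _ (fun hh => ?_) (fun hh => ?_)
          · exact hPdisj p.val p.property (by rw [hh]; exact q.property)
          · have hq : q.val = p.val := by rw [hh, hrevrev]
            exact hpq' hq.symm
        · show M ⟨arcRev p.val, _⟩ ⟨arcRev q.val, _⟩ = 0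
          refine hM0' _ _ _ _ (fun hh => hpq (Subtype.ext (hrevinj hh))) (fun hh => ?_)
          exact hPdisj p.val p.property (by rw [← hrevinj hh]; exact q.property)
  have hdet : M.det = (M.submatrix σ σ).det := (Matrix.det_submatrix_equiv_self σ M).symm
  rw [hdet, hsub, Matrix.det_fromBlocks_zero₂₁, Matrix.det_diagonal,
    Matrix.det_blockDiagonal]
  have h1 : ∏ e : {e : V × V // e ∈ F}, (1 + γ e.val * u) = ∏ e ∈ F, (1 + γ e * u) :=
    Finset.prod_coe_sort F (fun e => 1 + γ e * u)
  have h2 : ∏ p : {p : V × V // p ∈ P}, (K p).det =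
      ∏ e ∈ P, ((1 + γ e * u) * (1 + γ (arcRev e) * u) - β e * β (arcRev e) * u ^ 2) := by
    rw [← Finset.prod_coe_sort P
      (fun e => (1 + γ e * u) * (1 + γ (arcRev e) * u) - β e * β (arcRev e) * u ^ 2)]
    refine Finset.prod_congr rfl (fun p _ => ?_)
    rw [show (K p).det = _ from Matrix.det_fin_two_of _ _ _ _]
    ring
  rw [h1, h2]
end

section
/- Let D be a finite loopless digraph with M arcs and rates β_e > 0, δ_v > 0, and let u be a real number such that 1 + γ_e u ≠ 0 for every arc e with e⁻¹ ∉ A(D) and G_e ≠ 0 for every arc e with e⁻¹ ∈ A(D). Then I_M + u(J B′ + E) is invertible and its inverse is given entrywise by: ((I_M + u(J B′ + E))⁻¹)_{ee} = 1/(1 + γ_e u) if e⁻¹ ∉ A(D); ((I_M + u(J B′ + E))⁻¹)_{ee} = (1 + γ_{e⁻¹} u)/G_e and ((I_M + u(J B′ + E))⁻¹)_{e e⁻¹} = −u β_{e⁻¹}/G_e if e⁻¹ ∈ A(D); and all other entries are 0. -/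
/-!
With `c e = 1 + γ_e u` and `b e = u β_e`, the matrix `I + u(J B′ + E)` is `diag c + J diag b`,
where `J` sends an arc to its reverse. Matrices of the shape `diag x + J diag y` are closed under
multiplication, since `diag x * J = J * diag (x ∘ rev)` and `J diag x J` is diagonal with entries
`x e⁻¹` (or `0` when `e⁻¹` is not an arc). Such a matrix consists of `1 × 1` blocks `c e` for
unpaired arcs and `2 × 2` blocks `[[c e, b e⁻¹], [b e, c e⁻¹]]` for pairs `{e, e⁻¹}`, whose
determinant is `G_e`; the claimed inverse is the blockwise inverse.
-/
open Matrix BigOperators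

@[simp]
theorem arcRev_arcRev {V : Type*} (e : V × V) : arcRev (arcRev e) = e := rfl

section PairDet

variable {V R : Type*}

def pairDet [CommRing R] (c b : V × V → R) (e : V × V) : R :=
  c e * c (arcRev e) - b e * b (arcRev e)

theorem pairDet_arcRev [CommRing R] (c b : V × V → R) (e : V × V) :
    pairDet c b (arcRev e) = pairDet c b e := by
  rw [pairDet, pairDet, arcRev_arcRev]
  ring

end PairDet

section ArcMatrices

variable {V R S K : Type*} [DecidableEq V] (A : Finset (V × V))

def arcDiagonal [Zero R] (x : V × V → R) : Matrix A A R := diagonal fun e => x e.val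

def arcRevMatrix [Zero R] [One R] : Matrix A A R :=
  of fun e f => if f.val = arcRev e.val then 1 else 0

variable {A}

theorem arcDiagonal_add [AddZeroClass R] (x y : V × V → R) :
    arcDiagonal A x + arcDiagonal A y = arcDiagonal A (x + y) :=
  diagonal_add _ _

theorem smul_arcDiagonal [Zero R] [SMulZeroClass S R] (r : S) (x : V × V → R) :
    r • arcDiagonal A x = arcDiagonal A (r • x) :=
  (diagonal_smul _ _).symm

theorem arcDiagonal_one [Zero R] [One R] : arcDiagonal A (1 : V × V → R) = 1 :=
  diagonal_one

theorem arcDiagonal_eq_one [Zero R] [One R] {x : V × V → R} (hx : ∀ e ∈ A, x e = 1) :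
    arcDiagonal A x = 1 := by
  rw [← diagonal_one]
  exact congrArg diagonal (funext fun e => hx e e.2)

theorem arcDiagonal_mul_arcDiagonal [NonUnitalNonAssocSemiring R] (x y : V × V → R) :
    arcDiagonal A x * arcDiagonal A y = arcDiagonal A (x * y) :=
  diagonal_mul_diagonal _ _

theorem arcRevMatrix_mul_arcDiagonal_apply [NonAssocSemiring R] (x : V × V → R) (e f : A) :
    (arcRevMatrix A * arcDiagonal A x : Matrix A A R) e f =
      if f.val = arcRev e.val then x f.val else 0 := by
  simp [arcRevMatrix, arcDiagonal, mul_diagonal]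

theorem arcDiagonal_mul_arcRevMatrix [NonAssocSemiring R] (x : V × V → R) :
    arcDiagonal A x * arcRevMatrix A = arcRevMatrix A * arcDiagonal A (x ∘ arcRev) := by
  ext e f
  rw [arcRevMatrix_mul_arcDiagonal_apply]
  by_cases h : f.val = arcRev e.val <;> simp [arcDiagonal, arcRevMatrix, h]

theorem arcRevMatrix_mul_apply [NonAssocSemiring R] (N : Matrix A A R) (e g : A) :
    (arcRevMatrix A * N : Matrix A A R) e g =
      if h : arcRev e.val ∈ A then N ⟨arcRev e.val, h⟩ g else 0 := by
  rw [mul_apply]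
  split_ifs with h
  · rw [Finset.sum_eq_single ⟨arcRev e.val, h⟩]
    · simp [arcRevMatrix]
    · intro f _ hf
      simp only [arcRevMatrix, of_apply, ite_mul, one_mul, zero_mul]
      exact if_neg fun hfe => hf (Subtype.ext hfe)
    · simp
  · refine Finset.sum_eq_zero fun f _ => ?_
    simp only [arcRevMatrix, of_apply, ite_mul, one_mul, zero_mul]
    exact if_neg fun hfe : f.val = arcRev e.val => h (hfe ▸ f.2)

theorem arcRevMatrix_mul_self [NonAssocSemiring R] :
    (arcRevMatrix A * arcRevMatrix A : Matrix A A R) =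
      arcDiagonal A fun e => if arcRev e ∈ A then 1 else 0 := by
  ext e g
  rw [arcRevMatrix_mul_apply]
  split_ifs with h
  · simp only [arcRevMatrix, arcDiagonal, of_apply, arcRev_arcRev, diagonal_apply, h, if_true,
      ← Subtype.ext_iff, eq_comm]
  · simp [arcDiagonal, diagonal_apply, h]

theorem arcRevMatrix_mul_arcDiagonal_mul_arcRevMatrix [Semiring R] (x : V × V → R) :
    arcRevMatrix A * arcDiagonal A x * arcRevMatrix A =
      arcDiagonal A fun e => if arcRev e ∈ A then x (arcRev e) else 0 := by
  rw [mul_assoc, arcDiagonal_mul_arcRevMatrix, ← mul_assoc, arcRevMatrix_mul_self,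
    arcDiagonal_mul_arcDiagonal]
  congr 1
  ext e
  simp only [Pi.mul_apply, Function.comp_apply, ite_mul, one_mul, zero_mul]

theorem arcRevMatrix_mul_arcDiagonal_eq_zero [NonAssocSemiring R] {x : V × V → R}
    (hx : ∀ e ∈ A, arcRev e ∈ A → x e = 0) : arcRevMatrix A * arcDiagonal A x = 0 := by
  ext e f
  rw [arcRevMatrix_mul_arcDiagonal_apply]
  split_ifs with h
  · exact hx f f.2 (h ▸ e.2)
  · rfl

theorem arcDiagonal_add_arcRevMatrix_mul_arcDiagonal_apply [NonAssocSemiring R]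
    (hA : ∀ e ∈ A, e.1 ≠ e.2) (d w : V × V → R) (e f : A) :
    (arcDiagonal A d + arcRevMatrix A * arcDiagonal A w : Matrix A A R) e f =
      if e = f then d e else if f.val = arcRev e.val then w f else 0 := by
  rw [Matrix.add_apply, arcRevMatrix_mul_arcDiagonal_apply]
  by_cases hef : e = f
  · subst hef
    have : e.val ≠ arcRev e.val := fun h => hA e e.2 (congrArg Prod.fst h)
    simp [arcDiagonal, this]
  · simp [arcDiagonal, hef]

theorem arcDiagonal_add_arcRevMatrix_mul [CommSemiring R] (c b d w : V × V → R) :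
    (arcDiagonal A c + arcRevMatrix A * arcDiagonal A b) *
        (arcDiagonal A d + arcRevMatrix A * arcDiagonal A w) =
      arcDiagonal A (fun e => c e * d e + if arcRev e ∈ A then b (arcRev e) * w e else 0) +
        arcRevMatrix A * arcDiagonal A (fun e => c (arcRev e) * w e + b e * d e) := by
  rw [add_mul, mul_add, mul_add, arcDiagonal_mul_arcDiagonal, ← mul_assoc (arcDiagonal A c),
    arcDiagonal_mul_arcRevMatrix, mul_assoc, arcDiagonal_mul_arcDiagonal,
    mul_assoc (arcRevMatrix A), arcDiagonal_mul_arcDiagonal,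
    ← mul_assoc (arcRevMatrix A * arcDiagonal A b), arcRevMatrix_mul_arcDiagonal_mul_arcRevMatrix,
    arcDiagonal_mul_arcDiagonal,
    show ∀ P Q S T : Matrix A A R, P + Q + (S + T) = P + T + (Q + S) from fun _ _ _ _ => by abel,
    arcDiagonal_add, ← mul_add, arcDiagonal_add]
  congr 3
  funext e
  simp only [Pi.mul_apply, ite_mul, zero_mul]

theorem one_add_smul_arcRevMatrix_mul_arcDiagonal_add_arcDiagonal [CommSemiring R] (u : R)
    (β γ : V × V → R) :
    1 + u • (arcRevMatrix A * arcDiagonal A β + arcDiagonal A γ) =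
      arcDiagonal A (fun e => 1 + γ e * u) + arcRevMatrix A * arcDiagonal A (fun e => u * β e) := by
  rw [smul_add, ← mul_smul_comm, smul_arcDiagonal, smul_arcDiagonal, ← arcDiagonal_one,
    add_comm (arcRevMatrix A * _), ← add_assoc, arcDiagonal_add]
  congr 2
  funext e
  exact congrArg (1 + ·) (mul_comm u (γ e))

theorem arcDiagonal_add_arcRevMatrix_mul_inverse [Field K] (c b : V × V → K)
    (hc : ∀ e ∈ A, arcRev e ∉ A → c e ≠ 0) (hdet : ∀ e ∈ A, arcRev e ∈ A → pairDet c b e ≠ 0) :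
    (arcDiagonal A c + arcRevMatrix A * arcDiagonal A b) *
        (arcDiagonal A (fun e => if arcRev e ∈ A then c (arcRev e) / pairDet c b e else 1 / c e) +
          arcRevMatrix A * arcDiagonal A (fun e => -b e / pairDet c b e)) = 1 := by
  rw [arcDiagonal_add_arcRevMatrix_mul, arcRevMatrix_mul_arcDiagonal_eq_zero, add_zero]
  · refine arcDiagonal_eq_one fun e he => ?_
    split_ifs with hr
    · field_simp [hdet e he hr]
      unfold pairDet
      ring
    · simp [hc e he hr]
  · intro f _ hr
    simp only [hr, if_true]
    ring

end ArcMatrices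

theorem inverse_one_add_smul_JB_add_E_general
    {V : Type*} [DecidableEq V]
    (A : Finset (V × V)) (hloopless : ∀ e ∈ A, e.1 ≠ e.2)
    (β : V × V → ℝ) (δ : V → ℝ)
    (γ : V × V → ℝ) (hγ : ∀ e : V × V, γ e = β e + δ e.1 + δ e.2)
    (u : ℝ)
    (G : V × V → ℝ)
    (hG : ∀ e : V × V,
      G e = (1 + γ e * u) * (1 + γ (arcRev e) * u) - β e * β (arcRev e) * u ^ 2)
    (B' D1 D2 E : Matrix {e : V × V // e ∈ A} {e : V × V // e ∈ A} ℝ)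
    (hB' : B' = Matrix.diagonal fun e => β e.val)
    (hD1 : D1 = Matrix.diagonal fun e => δ e.val.1)
    (hD2 : D2 = Matrix.diagonal fun e => δ e.val.2)
    (hE : E = B' + D1 + D2)
    (J : Matrix {e : V × V // e ∈ A} {e : V × V // e ∈ A} ℝ)
    (hJ : ∀ e f : {e : V × V // e ∈ A},
      J e f = if f.val = arcRev e.val then 1 else 0)
    (hu1 : ∀ e ∈ A, arcRev e ∉ A → 1 + γ e * u ≠ 0)
    (hu2 : ∀ e ∈ A, arcRev e ∈ A → G e ≠ 0)
    (Minv : Matrix {e : V × V // e ∈ A} {e : V × V // e ∈ A} ℝ)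
    (hMinv : ∀ e f : {e : V × V // e ∈ A},
      Minv e f =
        if e = f then
          (if arcRev e.val ∈ A then (1 + γ (arcRev e.val) * u) / G e.val
           else 1 / (1 + γ e.val * u))
        else if arcRev e.val ∈ A ∧ f.val = arcRev e.val then
          -(u * β (arcRev e.val)) / G e.val
        else 0) :
    IsUnit (1 + u • (J * B' + E)) ∧ (1 + u • (J * B' + E))⁻¹ = Minv := by
  set c : V × V → ℝ := fun e => 1 + γ e * u
  set b : V × V → ℝ := fun e => u * β e
  have hGc : G = pairDet c b := funext fun e => by rw [hG, pairDet]; ring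
  have hM : 1 + u • (J * B' + E) = arcDiagonal A c + arcRevMatrix A * arcDiagonal A b := by
    have hJ' : J = arcRevMatrix A := Matrix.ext hJ
    have hE' : E = arcDiagonal A γ := by
      rw [hE, hB', hD1, hD2, diagonal_add, diagonal_add]
      exact congrArg diagonal (funext fun e => (hγ e.val).symm)
    rw [hJ', hE', show B' = arcDiagonal A β from hB',
      one_add_smul_arcRevMatrix_mul_arcDiagonal_add_arcDiagonal]
  have hMinv' : Minv =
      arcDiagonal A (fun e => if arcRev e ∈ A then c (arcRev e) / pairDet c b e else 1 / c e) +
        arcRevMatrix A * arcDiagonal A (fun e => -b e / pairDet c b e) := by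
    ext e f
    rw [hMinv, arcDiagonal_add_arcRevMatrix_mul_arcDiagonal_apply hloopless, hGc]
    by_cases hef : e = f
    · simp only [hef, if_true]
      rfl
    by_cases hfe : f.val = arcRev e.val
    · rw [if_neg hef, if_neg hef, if_pos ⟨hfe ▸ f.2, hfe⟩, if_pos hfe, hfe, pairDet_arcRev]
    · simp only [hef, hfe, and_false, if_false]
  have hinv := arcDiagonal_add_arcRevMatrix_mul_inverse c b hu1 (hGc ▸ hu2)
  rw [hM, hMinv']
  exact ⟨.of_mul_eq_one _ hinv, inv_eq_right_inv hinv⟩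

/-- For a finite loopless digraph with rates `β`, `δ` and a real `u` such
that `1 + γ_e u ≠ 0` for every arc with `e⁻¹ ∉ A` and `G_e ≠ 0` for every arc with
`e⁻¹ ∈ A`, the matrix `I + u(J B′ + E)` is invertible and its inverse is given entrywise
by `1/(1 + γ_e u)` on the diagonal for specially-oriented arcs, by `(1 + γ_{e⁻¹} u)/G_e`
on the diagonal and `−u β_{e⁻¹}/G_e` in position `(e, e⁻¹)` for paired arcs, and `0`
elsewhere. -/
theorem inverse_one_add_smul_JB_add_E
    {V : Type*} [Fintype V] [DecidableEq V]
    (A : Finset (V × V)) (hloopless : ∀ e ∈ A, e.1 ≠ e.2)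
    (β : V × V → ℝ) (δ : V → ℝ)
    (hβ : ∀ e ∈ A, 0 < β e) (hδ : ∀ v : V, 0 < δ v)
    (γ : V × V → ℝ) (hγ : ∀ e : V × V, γ e = β e + δ e.1 + δ e.2)
    (u : ℝ)
    (G : V × V → ℝ)
    (hG : ∀ e : V × V,
      G e = (1 + γ e * u) * (1 + γ (arcRev e) * u) - β e * β (arcRev e) * u ^ 2)
    (B' D1 D2 E : Matrix {e : V × V // e ∈ A} {e : V × V // e ∈ A} ℝ)
    (hB' : B' = Matrix.diagonal fun e => β e.val)
    (hD1 : D1 = Matrix.diagonal fun e => δ e.val.1)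
    (hD2 : D2 = Matrix.diagonal fun e => δ e.val.2)
    (hE : E = B' + D1 + D2)
    (J : Matrix {e : V × V // e ∈ A} {e : V × V // e ∈ A} ℝ)
    (hJ : ∀ e f : {e : V × V // e ∈ A},
      J e f = if f.val = arcRev e.val then 1 else 0)
    (hu1 : ∀ e ∈ A, arcRev e ∉ A → 1 + γ e * u ≠ 0)
    (hu2 : ∀ e ∈ A, arcRev e ∈ A → G e ≠ 0)
    (Minv : Matrix {e : V × V // e ∈ A} {e : V × V // e ∈ A} ℝ)
    (hMinv : ∀ e f : {e : V × V // e ∈ A},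
      Minv e f =
        if e = f then
          (if arcRev e.val ∈ A then (1 + γ (arcRev e.val) * u) / G e.val
           else 1 / (1 + γ e.val * u))
        else if arcRev e.val ∈ A ∧ f.val = arcRev e.val then
          -(u * β (arcRev e.val)) / G e.val
        else 0) :
    IsUnit (1 + u • (J * B' + E)) ∧ (1 + u • (J * B' + E))⁻¹ = Minv :=
  inverse_one_add_smul_JB_add_E_general A hloopless β δ γ hγ u G hG B' D1 D2 E hB' hD1 hD2 hE J hJ
    hu1 hu2 Minv hMinv
end

section
/- (Regular graph case.) Let G be a finite simple connected d-regular graph with N vertices and M edges, and let β_e = β > 0 and δ_v = δ > 0 be constant rates. Set γ = β + 2δ and G(u) = (1 + γu)² − β²u². Then for every real u, det(I_{N+2M} − u𝒜) = G(u)^{M − N} · det( { (1 + δu) G(u) + dβ²u²(1 + 2δu) } · I_N − βu(1 + 2δu)(1 + γu) · A(G) ). -/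
open Matrix BigOperators

namespace MetzlerAux

variable {V : Type*} [Fintype V] [DecidableEq V]
variable (G : SimpleGraph V) [DecidableRel G.Adj]

/-- Reversal of an arc as an element of the arc subtype. -/
def revE (e : {e : V × V // G.Adj e.1 e.2}) : {e : V × V // G.Adj e.1 e.2} :=
  ⟨arcRev e.val, e.prop.symm⟩

@[simp] lemma revE_revE (e : {e : V × V // G.Adj e.1 e.2}) : revE G (revE G e) = e := by
  cases e; rfl

lemma revE_eq_iff (e f : {e : V × V // G.Adj e.1 e.2}) : f = revE G e ↔ e = revE G f := by
  constructor <;> rintro rfl <;> simp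

/-- The arc-reversal permutation matrix. -/
def Jmat : Matrix {e : V × V // G.Adj e.1 e.2} {e : V × V // G.Adj e.1 e.2} ℝ :=
  Matrix.of fun e f => if f = revE G e then 1 else 0

/-- Canonical terminus incidence matrix. -/
def Km : Matrix V {e : V × V // G.Adj e.1 e.2} ℝ :=
  Matrix.of fun v e => if e.val.2 = v then 1 else 0

/-- Canonical origin incidence matrix. -/
def Lm : Matrix V {e : V × V // G.Adj e.1 e.2} ℝ :=
  Matrix.of fun v e => if e.val.1 = v then 1 else 0

/-- Canonical non-backtracking matrix. -/
def Hm : Matrix {e : V × V // G.Adj e.1 e.2} {e : V × V // G.Adj e.1 e.2} ℝ :=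
  Matrix.of fun e f => if e.val.2 = f.val.1 ∧ f.val ≠ arcRev e.val then 1 else 0

lemma Jmat_mul_Jmat : Jmat G * Jmat G = 1 := by
  ext e f
  simp only [Matrix.mul_apply, Jmat, Matrix.of_apply, ite_mul, one_mul, zero_mul]
  rw [Finset.sum_ite_eq' Finset.univ (revE G e)]
  simp [Matrix.one_apply, eq_comm]

lemma Km_mul_Jmat : Km G * Jmat G = Lm G := by
  ext v f
  simp only [Matrix.mul_apply, Jmat, Km, Matrix.of_apply, mul_ite, mul_one, mul_zero]
  have : ∀ e : {e : V × V // G.Adj e.1 e.2},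
      (if f = revE G e then (if e.val.2 = v then (1:ℝ) else 0) else 0)
        = if e = revE G f then (if e.val.2 = v then (1:ℝ) else 0) else 0 := by
    intro e; exact if_congr (revE_eq_iff G e f) rfl rfl
  rw [Finset.sum_congr rfl fun e _ => this e, Finset.sum_ite_eq' Finset.univ (revE G f)]
  simp [Lm, revE, arcRev]
  rfl

lemma Km_mul_Lm_transpose : Km G * (Lm G)ᵀ = G.adjMatrix ℝ := by
  ext v w
  simp only [Matrix.mul_apply, Km, Lm, Matrix.transpose_apply, Matrix.of_apply,
    SimpleGraph.adjMatrix_apply]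
  by_cases h : G.Adj v w
  · rw [Finset.sum_eq_single (⟨(w, v), h.symm⟩ : {e : V × V // G.Adj e.1 e.2})]
    · simp [h]
    · intro e _ hne
      rcases e with ⟨⟨x, y⟩, he⟩
      by_cases h1 : y = v
      · by_cases h2 : x = w
        · exact absurd (by subst h1; subst h2; rfl) hne
        · simp [h2]
      · simp [h1]
    · simp
  · rw [Finset.sum_eq_zero, if_neg h]
    intro e _
    rcases e with ⟨⟨x, y⟩, he⟩
    by_cases h1 : y = v
    · by_cases h2 : x = w
      · exfalso; apply h; subst h1; subst h2; exact he.symm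
      · simp [h2]
    · simp [h1]

lemma Lm_mul_Lm_transpose {d : ℕ} (hreg : G.IsRegularOfDegree d) :
    Lm G * (Lm G)ᵀ = (d : ℝ) • 1 := by
  ext v w
  simp only [Matrix.mul_apply, Lm, Matrix.transpose_apply, Matrix.of_apply, Matrix.smul_apply,
    Matrix.one_apply, smul_eq_mul]
  by_cases hvw : v = w
  · subst hvw
    simp only [if_pos rfl, mul_one]
    have : ∀ e : {e : V × V // G.Adj e.1 e.2},
        (if e.val.1 = v then (1:ℝ) else 0) * (if e.val.1 = v then (1:ℝ) else 0)
          = if e.val.1 = v then (1:ℝ) else 0 := by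
      intro e; by_cases h : e.val.1 = v <;> simp [h]
    rw [Finset.sum_congr rfl fun e _ => this e, Finset.sum_boole]
    have hcard : (Finset.univ.filter
        fun e : {e : V × V // G.Adj e.1 e.2} => e.val.1 = v).card = d := by
      rw [← Fintype.card_subtype]
      have e1 : {e : {e : V × V // G.Adj e.1 e.2} // e.val.1 = v} ≃ G.neighborSet v :=
        { toFun := fun e => ⟨e.val.val.2, by
            have := e.val.prop; rw [e.prop] at this; exact this⟩
          invFun := fun y => ⟨⟨(v, y.val), y.prop⟩, rfl⟩
          left_inv := by
            rintro ⟨⟨⟨x, y⟩, he⟩, hx⟩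
            simp only at hx
            subst hx; rfl
          right_inv := fun y => rfl }
      rw [Fintype.card_congr e1, SimpleGraph.card_neighborSet_eq_degree]
      exact hreg v
    rw [hcard]; simp
  · rw [Finset.sum_eq_zero, if_neg hvw, mul_zero]
    intro e _
    by_cases h1 : e.val.1 = v
    · simp [h1, hvw]
    · simp [h1]

lemma Hm_transpose : (Hm G)ᵀ = (Lm G)ᵀ * Km G - Jmat G := by
  ext e f
  simp only [Matrix.transpose_apply, Matrix.sub_apply, Matrix.mul_apply, Hm, Lm, Km, Jmat,
    Matrix.of_apply]
  have hsum : (∑ v : V, (if e.val.1 = v then (1:ℝ) else 0) * (if f.val.2 = v then 1 else 0))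
      = if e.val.1 = f.val.2 then 1 else 0 := by
    rw [Finset.sum_eq_single e.val.1]
    · simp [eq_comm]
    · intro b _ hb; rw [if_neg (Ne.symm hb), zero_mul]
    · simp
  rw [hsum]
  by_cases hrev : f = revE G e
  · have h1 : f.val.2 = e.val.1 := by rw [hrev]; rfl
    have h2 : ¬ (e.val ≠ arcRev f.val) := by
      simp only [ne_eq, not_not]
      rw [hrev]; cases e; rfl
    rw [if_pos hrev, if_neg (by tauto), if_pos h1.symm]
    norm_num
  · have h2 : e.val ≠ arcRev f.val := by
      intro hcon
      apply hrev
      rw [revE_eq_iff]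
      exact Subtype.ext hcon
    rw [if_neg hrev, sub_zero]
    by_cases h1 : f.val.2 = e.val.1
    · rw [if_pos ⟨h1, h2⟩, if_pos h1.symm]
    · rw [if_neg (by tauto), if_neg (fun hc => h1 hc.symm)]
lemma card_arc : Fintype.card {e : V × V // G.Adj e.1 e.2} = 2 * G.edgeFinset.card := by
  rw [Fintype.card_subtype, SimpleGraph.two_mul_card_edgeFinset]

lemma det_smul_one_add_smul_Jmat (x y : ℝ) :
    (x • (1 : Matrix {e : V × V // G.Adj e.1 e.2} {e : V × V // G.Adj e.1 e.2} ℝ)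
      + y • Jmat G).det = (x ^ 2 - y ^ 2) ^ G.edgeFinset.card := by
  classical
  set E := {e : V × V // G.Adj e.1 e.2}
  let emb : V ≃ Fin (Fintype.card V) := Fintype.equivFin V
  let O := {e : E // emb e.val.1 < emb e.val.2}
  let g1 : Bool × O → E := fun p => if p.1 then p.2.val else revE G p.2.val
  have hposrev : ∀ o : O, ¬ (emb (revE G o.val).val.1 < emb (revE G o.val).val.2) := by
    intro o
    have := o.prop
    simp only [revE, arcRev]
    exact fun hcon => absurd this (lt_asymm hcon)
  have hg1inj : Function.Injective g1 := by
    rintro ⟨b, o⟩ ⟨b', o'⟩ h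
    cases b <;> cases b' <;>
      simp only [g1, if_true, if_false, Bool.false_eq_true, Prod.mk.injEq] at h ⊢
    · exact ⟨trivial, Subtype.ext (by have := congrArg (revE G) h; simpa using this)⟩
    · exact absurd o'.prop (h ▸ hposrev o)
    · exfalso
      have hco : emb (revE G o'.val).val.1 < emb (revE G o'.val).val.2 := by
        rw [← h]; exact o.prop
      exact hposrev o' hco
    · exact ⟨trivial, Subtype.ext h⟩
  have hg1surj : Function.Surjective g1 := by
    intro e
    by_cases h : emb e.val.1 < emb e.val.2
    · exact ⟨(true, ⟨e, h⟩), rfl⟩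
    · have hne : emb e.val.1 ≠ emb e.val.2 := by
        intro hc
        exact G.ne_of_adj e.prop (emb.injective hc)
      have h' : emb (revE G e).val.1 < emb (revE G e).val.2 := by
        simp only [revE, arcRev]
        exact lt_of_le_of_ne (not_lt.1 h) (Ne.symm hne)
      exact ⟨(false, ⟨revE G e, h'⟩), by simp [g1]⟩
  let e1 : Bool × O ≃ E := Equiv.ofBijective g1 ⟨hg1inj, hg1surj⟩
  have hrev : ∀ (b : Bool) (o : O), revE G (g1 (b, o)) = g1 (!b, o) := by
    intro b o; cases b <;> simp [g1]
  have hcardO : Fintype.card O = G.edgeFinset.card := by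
    have h1 := Fintype.card_congr e1
    rw [Fintype.card_prod, Fintype.card_bool, card_arc] at h1
    omega
  have key1 : ∀ p q : Bool × O,
      (x • (1 : Matrix E E ℝ) + y • Jmat G) (g1 p) (g1 q)
        = (if p = q then x else 0) + (if q = (!p.1, p.2) then y else 0) := by
    intro p q
    have h1 : (g1 p = g1 q) = (p = q) := propext hg1inj.eq_iff
    have h2 : (g1 q = revE G (g1 p)) = (q = (!p.1, p.2)) := by
      rw [show revE G (g1 p) = g1 (!p.1, p.2) from hrev p.1 p.2]
      exact propext hg1inj.eq_iff
    simp only [Matrix.add_apply, Matrix.smul_apply, Matrix.one_apply, Jmat, Matrix.of_apply,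
      smul_eq_mul, mul_ite, mul_one, mul_zero, h1, h2]
  have hblock : ((x • (1 : Matrix E E ℝ) + y • Jmat G).submatrix e1 e1)
      = Matrix.blockDiagonal (fun _ : O =>
          Matrix.of fun b b' : Bool => if b = b' then x else y) := by
    ext ⟨b, o⟩ ⟨b', o'⟩
    rw [Matrix.submatrix_apply]
    rw [show e1 (b, o) = g1 (b, o) from rfl, show e1 (b', o') = g1 (b', o') from rfl]
    rw [key1]
    simp only [Matrix.blockDiagonal_apply, Matrix.of_apply, Prod.mk.injEq]
    cases b <;> cases b' <;> by_cases h : o = o' <;> simp [h] <;>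
      (intro hc; exact absurd hc.symm h)
  have hdetQ : (Matrix.of fun b b' : Bool => if b = b' then x else y).det = x ^ 2 - y ^ 2 := by
    rw [← Matrix.det_submatrix_equiv_self finTwoEquiv]
    rw [Matrix.det_fin_two]
    simp [finTwoEquiv]
    ring
  calc (x • (1 : Matrix E E ℝ) + y • Jmat G).det
      = ((x • (1 : Matrix E E ℝ) + y • Jmat G).submatrix e1 e1).det :=
        (Matrix.det_submatrix_equiv_self e1 _).symm
    _ = (x ^ 2 - y ^ 2) ^ G.edgeFinset.card := by
        rw [hblock, Matrix.det_blockDiagonal]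
        simp [hdetQ, hcardO]

theorem key
    {V : Type*} [Fintype V] [DecidableEq V]
    (G : SimpleGraph V) [DecidableRel G.Adj]
    (d : ℕ) (hreg : G.IsRegularOfDegree d)
    (β δ : ℝ)
    (K L : Matrix V {e : V × V // G.Adj e.1 e.2} ℝ)
    (hK : ∀ (v : V) (e : {e : V × V // G.Adj e.1 e.2}),
      K v e = if e.val.2 = v then 1 else 0)
    (hL : ∀ (v : V) (e : {e : V × V // G.Adj e.1 e.2}),
      L v e = if e.val.1 = v then 1 else 0)
    (H : Matrix {e : V × V // G.Adj e.1 e.2} {e : V × V // G.Adj e.1 e.2} ℝ)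
    (hH : ∀ e f : {e : V × V // G.Adj e.1 e.2},
      H e f = if e.val.2 = f.val.1 ∧ f.val ≠ arcRev e.val then 1 else 0)
    (𝒜 : Matrix (V ⊕ {e : V × V // G.Adj e.1 e.2})
        (V ⊕ {e : V × V // G.Adj e.1 e.2}) ℝ)
    (h𝒜 : 𝒜 = Matrix.fromBlocks (-(δ • (1 : Matrix V V ℝ))) (β • K)
        (δ • Lᵀ) (β • Hᵀ - (β + 2 * δ) • 1))
    (N M : ℕ) (hN : N = Fintype.card V) (hM : M = G.edgeFinset.card)
    (u : ℝ)
    (ha : (1 : ℝ) + δ * u ≠ 0)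
    (hg : (1 + (β + 2 * δ) * u) ^ 2 - β ^ 2 * u ^ 2 ≠ 0) :
    ((1 + (β + 2 * δ) * u) ^ 2 - β ^ 2 * u ^ 2) ^ N * (1 - u • 𝒜).det
      = ((1 + (β + 2 * δ) * u) ^ 2 - β ^ 2 * u ^ 2) ^ M *
        (((1 + δ * u) * ((1 + (β + 2 * δ) * u) ^ 2 - β ^ 2 * u ^ 2)
            + d * β ^ 2 * u ^ 2 * (1 + 2 * δ * u)) • (1 : Matrix V V ℝ)
          - (β * u * (1 + 2 * δ * u) * (1 + (β + 2 * δ) * u)) •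
              (G.adjMatrix ℝ)).det := by
  have hKK : K = Km G := by ext v e; rw [hK]; rfl
  have hLL : L = Lm G := by ext v e; rw [hL]; rfl
  have hHH : H = Hm G := by ext e f; rw [hH]; rfl
  subst hKK hLL hHH h𝒜 hN hM
  set a := 1 + δ * u with ha_def
  set c := 1 + (β + 2 * δ) * u with hc_def
  set g := c ^ 2 - β ^ 2 * u ^ 2 with hg_def
  -- invertibility of the top-left block
  have hmul1 : (a • (1 : Matrix V V ℝ)) * (a⁻¹ • 1) = 1 := by
    rw [Matrix.smul_mul, Matrix.mul_smul, Matrix.one_mul, smul_smul,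
      mul_inv_cancel₀ ha, one_smul]
  haveI : Invertible (a • (1 : Matrix V V ℝ)) :=
    invertibleOfRightInverse _ (a⁻¹ • 1) hmul1
  have hinvOf : ⅟(a • (1 : Matrix V V ℝ)) = a⁻¹ • 1 := invOf_eq_right_inv hmul1
  -- the block form of 1 - u𝒜
  have hS : (1 : Matrix (V ⊕ {e : V × V // G.Adj e.1 e.2})
        (V ⊕ {e : V × V // G.Adj e.1 e.2}) ℝ)
        - u • Matrix.fromBlocks (-(δ • (1 : Matrix V V ℝ))) (β • Km G)
            (δ • (Lm G)ᵀ) (β • (Hm G)ᵀ - (β + 2 * δ) • 1)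
      = Matrix.fromBlocks (a • 1) ((-(β * u)) • Km G)
          ((-(δ * u)) • (Lm G)ᵀ) (c • 1 - (β * u) • (Hm G)ᵀ) := by
    ext (i | i) (j | j) <;>
      simp only [Matrix.sub_apply, Matrix.smul_apply, Matrix.fromBlocks_apply₁₁,
        Matrix.fromBlocks_apply₁₂, Matrix.fromBlocks_apply₂₁, Matrix.fromBlocks_apply₂₂,
        Matrix.one_apply, Matrix.neg_apply, smul_eq_mul, Sum.inl.injEq, Sum.inr.injEq,
        reduceCtorEq, if_false, ha_def, hc_def] <;>
      first
      | (split_ifs <;> ring)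
      | ring
  rw [hS, Matrix.det_fromBlocks₁₁, hinvOf]
  -- Schur complement rewriting
  have hCAB : ((-(δ * u)) • (Lm G)ᵀ) * (a⁻¹ • (1 : Matrix V V ℝ)) * ((-(β * u)) • Km G)
      = (δ * u * a⁻¹ * (β * u)) • ((Lm G)ᵀ * Km G) := by
    simp only [Matrix.smul_mul, Matrix.mul_smul, Matrix.mul_one, smul_smul]
    module
  set s := β * u + δ * u * a⁻¹ * (β * u) with hs_def
  set P := c • (1 : Matrix {e : V × V // G.Adj e.1 e.2} {e : V × V // G.Adj e.1 e.2} ℝ)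
      + (β * u) • Jmat G with hP_def
  set Pi := g⁻¹ • (c • (1 : Matrix {e : V × V // G.Adj e.1 e.2}
      {e : V × V // G.Adj e.1 e.2} ℝ) - (β * u) • Jmat G) with hPi_def
  have hD' : (c • 1 - (β * u) • (Hm G)ᵀ)
        - ((-(δ * u)) • (Lm G)ᵀ) * (a⁻¹ • (1 : Matrix V V ℝ)) * ((-(β * u)) • Km G)
      = P - s • ((Lm G)ᵀ * Km G) := by
    rw [hCAB, Hm_transpose, hP_def, hs_def]
    module
  have hJJ := Jmat_mul_Jmat G
  have expand : (c • (1 : Matrix {e : V × V // G.Adj e.1 e.2}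
        {e : V × V // G.Adj e.1 e.2} ℝ) + (β * u) • Jmat G)
      * (c • 1 - (β * u) • Jmat G) = g • 1 := by
    simp only [Matrix.add_mul, Matrix.mul_sub, Matrix.smul_mul, Matrix.mul_smul,
      Matrix.one_mul, Matrix.mul_one, hJJ, smul_smul]
    rw [hg_def]
    module
  have hPPi : P * Pi = 1 := by
    rw [hP_def, hPi_def, Matrix.mul_smul, expand, smul_smul, inv_mul_cancel₀ hg, one_smul]
  have hD'2 : P - s • ((Lm G)ᵀ * Km G)
      = P * (1 - s • (Pi * ((Lm G)ᵀ * Km G))) := by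
    rw [Matrix.mul_sub, Matrix.mul_one, Matrix.mul_smul, ← Matrix.mul_assoc, hPPi,
      Matrix.one_mul]
  have hdetP : P.det = g ^ G.edgeFinset.card := by
    rw [hP_def, det_smul_one_add_smul_Jmat]
    congr 1
    rw [hg_def]; ring
  have swap_general : ∀ (X : Matrix {e : V × V // G.Adj e.1 e.2} V ℝ)
      (Y : Matrix V {e : V × V // G.Adj e.1 e.2} ℝ) (t : ℝ),
      ((1 : Matrix {e : V × V // G.Adj e.1 e.2} {e : V × V // G.Adj e.1 e.2} ℝ)
          - t • (X * Y)).det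
        = ((1 : Matrix V V ℝ) - t • (Y * X)).det := by
    intro X Y t
    have h1 : (1 : Matrix {e : V × V // G.Adj e.1 e.2}
          {e : V × V // G.Adj e.1 e.2} ℝ) - t • (X * Y) = 1 + ((-t) • X) * Y := by
      rw [Matrix.smul_mul, neg_smul, ← sub_eq_add_neg]
    have h2 : (1 : Matrix V V ℝ) + Y * ((-t) • X) = 1 - t • (Y * X) := by
      rw [Matrix.mul_smul, neg_smul, ← sub_eq_add_neg]
    rw [h1, Matrix.det_one_add_mul_comm, h2]
  have hswap : ((1 : Matrix {e : V × V // G.Adj e.1 e.2}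
        {e : V × V // G.Adj e.1 e.2} ℝ) - s • (Pi * ((Lm G)ᵀ * Km G))).det
      = ((1 : Matrix V V ℝ) - s • (Km G * Pi * (Lm G)ᵀ)).det := by
    have hassoc : Pi * ((Lm G)ᵀ * Km G) = (Pi * (Lm G)ᵀ) * Km G :=
      (Matrix.mul_assoc _ _ _).symm
    calc ((1 : Matrix {e : V × V // G.Adj e.1 e.2}
          {e : V × V // G.Adj e.1 e.2} ℝ) - s • (Pi * ((Lm G)ᵀ * Km G))).det
        = ((1 : Matrix {e : V × V // G.Adj e.1 e.2}
            {e : V × V // G.Adj e.1 e.2} ℝ) - s • ((Pi * (Lm G)ᵀ) * Km G)).det := by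
          rw [hassoc]
      _ = ((1 : Matrix V V ℝ) - s • (Km G * (Pi * (Lm G)ᵀ))).det :=
          swap_general _ _ _
      _ = ((1 : Matrix V V ℝ) - s • (Km G * Pi * (Lm G)ᵀ)).det := by
          rw [Matrix.mul_assoc]
  have hKP : Km G * Pi * (Lm G)ᵀ
      = g⁻¹ • (c • G.adjMatrix ℝ - (β * u * (d : ℝ)) • 1) := by
    rw [hPi_def]
    simp only [Matrix.mul_smul, Matrix.smul_mul, Matrix.mul_sub, Matrix.sub_mul,
      Matrix.mul_one, Matrix.one_mul]
    rw [Km_mul_Jmat, Km_mul_Lm_transpose, Lm_mul_Lm_transpose G hreg]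
    rw [smul_smul]
  have hfin : (1 : Matrix V V ℝ) - s • (Km G * Pi * (Lm G)ᵀ)
      = (1 + s * g⁻¹ * (β * u * (d : ℝ))) • 1 - (s * g⁻¹ * c) • G.adjMatrix ℝ := by
    rw [hKP]
    module
  have hRHS : ((a * g + (d : ℝ) * β ^ 2 * u ^ 2 * (1 + 2 * δ * u)) • (1 : Matrix V V ℝ)
        - (β * u * (1 + 2 * δ * u) * c) • G.adjMatrix ℝ)
      = (a * g) • ((1 + s * g⁻¹ * (β * u * (d : ℝ))) • (1 : Matrix V V ℝ)
          - (s * g⁻¹ * c) • G.adjMatrix ℝ) := by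
    have haa : a * a⁻¹ = 1 := mul_inv_cancel₀ ha
    have hgg : g * g⁻¹ = 1 := mul_inv_cancel₀ hg
    have hsval : a * s = β * u * (1 + 2 * δ * u) := by
      rw [hs_def]
      calc a * (β * u + δ * u * a⁻¹ * (β * u))
          = a * (β * u) + (a * a⁻¹) * (δ * u * (β * u)) := by ring
        _ = a * (β * u) + δ * u * (β * u) := by rw [haa, one_mul]
        _ = β * u * (1 + 2 * δ * u) := by rw [ha_def]; ring
    have e1 : a * g + (d : ℝ) * β ^ 2 * u ^ 2 * (1 + 2 * δ * u)
        = a * g * (1 + s * g⁻¹ * (β * u * (d : ℝ))) := by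
      have h1 : a * g * (1 + s * g⁻¹ * (β * u * (d : ℝ)))
          = a * g + (a * s) * (g * g⁻¹) * (β * u * (d : ℝ)) := by ring
      rw [h1, hsval, hgg]
      ring
    have e2 : β * u * (1 + 2 * δ * u) * c = a * g * (s * g⁻¹ * c) := by
      have h1 : a * g * (s * g⁻¹ * c) = (a * s) * (g * g⁻¹) * c := by ring
      rw [h1, hsval, hgg]
      ring
    rw [smul_sub, smul_smul, smul_smul, e1, e2]
  rw [hD', hD'2, Matrix.det_mul, hdetP, hswap, hfin, hRHS]
  rw [Matrix.det_smul, Matrix.det_smul, Matrix.det_one, mul_pow]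
  ring

end MetzlerAux

/-- regular graph case. Let `G` be a finite simple connected `d`-regular
graph with `N` vertices and `M` edges, constant rates `β > 0`, `δ > 0`, `γ = β + 2δ` and
`G(u) = (1 + γu)² − β²u²`. Then for every real `u`,
`det(I − u𝒜) = G(u)^{M−N} · det({(1+δu)G(u) + dβ²u²(1+2δu)} I_N
 − βu(1+2δu)(1+γu) A(G))`, stated here in the equivalent cleared form
`G(u)^N · det(I − u𝒜) = G(u)^M · det(⋯)` which is valid for every real `u`. -/
theorem det_one_sub_smul_metzler_regular
    {V : Type*} [Fintype V] [DecidableEq V]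
    (G : SimpleGraph V) [DecidableRel G.Adj] (hconn : G.Connected)
    (d : ℕ) (hreg : G.IsRegularOfDegree d)
    (β δ : ℝ) (hβ : 0 < β) (hδ : 0 < δ)
    (K L : Matrix V {e : V × V // G.Adj e.1 e.2} ℝ)
    (hK : ∀ (v : V) (e : {e : V × V // G.Adj e.1 e.2}),
      K v e = if e.val.2 = v then 1 else 0)
    (hL : ∀ (v : V) (e : {e : V × V // G.Adj e.1 e.2}),
      L v e = if e.val.1 = v then 1 else 0)
    (H : Matrix {e : V × V // G.Adj e.1 e.2} {e : V × V // G.Adj e.1 e.2} ℝ)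
    (hH : ∀ e f : {e : V × V // G.Adj e.1 e.2},
      H e f = if e.val.2 = f.val.1 ∧ f.val ≠ arcRev e.val then 1 else 0)
    (𝒜 : Matrix (V ⊕ {e : V × V // G.Adj e.1 e.2})
        (V ⊕ {e : V × V // G.Adj e.1 e.2}) ℝ)
    (h𝒜 : 𝒜 = Matrix.fromBlocks (-(δ • (1 : Matrix V V ℝ))) (β • K)
        (δ • Lᵀ) (β • Hᵀ - (β + 2 * δ) • 1))
    (N M : ℕ) (hN : N = Fintype.card V) (hM : M = G.edgeFinset.card)
    (u : ℝ) :
    ((1 + (β + 2 * δ) * u) ^ 2 - β ^ 2 * u ^ 2) ^ N * (1 - u • 𝒜).det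
      = ((1 + (β + 2 * δ) * u) ^ 2 - β ^ 2 * u ^ 2) ^ M *
        (((1 + δ * u) * ((1 + (β + 2 * δ) * u) ^ 2 - β ^ 2 * u ^ 2)
            + d * β ^ 2 * u ^ 2 * (1 + 2 * δ * u)) • (1 : Matrix V V ℝ)
          - (β * u * (1 + 2 * δ * u) * (1 + (β + 2 * δ) * u)) •
              (G.adjMatrix ℝ)).det := by

  have hδ0 : δ ≠ 0 := ne_of_gt hδ
  have h2δ : (2 * δ : ℝ) ≠ 0 := by positivity
  have h2βδ : (2 * β + 2 * δ : ℝ) ≠ 0 := by positivity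
  set B : Set ℝ := {-(δ⁻¹), -((2 * δ)⁻¹), -((2 * β + 2 * δ)⁻¹)} with hB
  have hBfin : B.Countable := (Set.toFinite B).countable
  have hdense : Dense Bᶜ := Set.Countable.dense_compl ℝ hBfin
  have hcont1 : Continuous (fun x : ℝ =>
      ((1 + (β + 2 * δ) * x) ^ 2 - β ^ 2 * x ^ 2) ^ N * (1 - x • 𝒜).det) := by
    apply Continuous.mul
    · fun_prop
    · exact Continuous.matrix_det (continuous_const.sub (continuous_id.smul continuous_const))
  have hcont2 : Continuous (fun x : ℝ =>
      ((1 + (β + 2 * δ) * x) ^ 2 - β ^ 2 * x ^ 2) ^ M *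
        ((((1 + δ * x) * ((1 + (β + 2 * δ) * x) ^ 2 - β ^ 2 * x ^ 2)
            + d * β ^ 2 * x ^ 2 * (1 + 2 * δ * x)) • (1 : Matrix V V ℝ)
          - (β * x * (1 + 2 * δ * x) * (1 + (β + 2 * δ) * x)) •
              (G.adjMatrix ℝ)).det)) := by
    apply Continuous.mul
    · fun_prop
    · apply Continuous.matrix_det
      apply Continuous.sub
      · fun_prop
      · fun_prop
  have heqon : Set.EqOn
      (fun x : ℝ =>
        ((1 + (β + 2 * δ) * x) ^ 2 - β ^ 2 * x ^ 2) ^ N * (1 - x • 𝒜).det)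
      (fun x : ℝ =>
        ((1 + (β + 2 * δ) * x) ^ 2 - β ^ 2 * x ^ 2) ^ M *
          ((((1 + δ * x) * ((1 + (β + 2 * δ) * x) ^ 2 - β ^ 2 * x ^ 2)
              + d * β ^ 2 * x ^ 2 * (1 + 2 * δ * x)) • (1 : Matrix V V ℝ)
            - (β * x * (1 + 2 * δ * x) * (1 + (β + 2 * δ) * x)) •
                (G.adjMatrix ℝ)).det)) Bᶜ := by
    intro x hx
    have hxB : x ∉ B := hx
    have ha : (1 : ℝ) + δ * x ≠ 0 := by
      intro h
      apply hxB
      have h1 : x = -δ⁻¹ := by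
        field_simp
        linarith
      rw [hB]
      simp [h1]
    have hg1 : (1 : ℝ) + 2 * δ * x ≠ 0 := by
      intro h
      apply hxB
      have h1 : x = -((2 * δ)⁻¹) := by
        field_simp
        linarith
      rw [hB]
      simp [h1]
    have hg2 : (1 : ℝ) + (2 * β + 2 * δ) * x ≠ 0 := by
      intro h
      apply hxB
      have h1 : x = -((2 * β + 2 * δ)⁻¹) := by
        field_simp
        linarith
      rw [hB]
      simp [h1]
    have hg : (1 + (β + 2 * δ) * x) ^ 2 - β ^ 2 * x ^ 2 ≠ 0 := by
      have hfact : (1 + (β + 2 * δ) * x) ^ 2 - β ^ 2 * x ^ 2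
          = (1 + 2 * δ * x) * (1 + (2 * β + 2 * δ) * x) := by ring
      rw [hfact]
      exact mul_ne_zero hg1 hg2
    exact MetzlerAux.key G d hreg β δ K L hK hL H hH 𝒜 h𝒜 N M hN hM x ha hg
  have heq := Continuous.ext_on hdense hcont1 hcont2 heqon
  exact congrFun heq u
end

section
/- (Characteristic polynomial of the Metzler matrix of a regular graph.) Let G be a finite simple connected d-regular graph with N vertices and M edges, with constant rates β_e = β > 0 and δ_v = δ > 0. Then for every real (or complex) λ, det(λ I_{N+2M} − 𝒜) = ( (λ + β + 2δ)² − β² )^{M − N} · det( { (λ + δ)((λ + β + 2δ)² − β²) + dβ²(λ + 2δ) } · I_N − β(λ + 2δ)(λ + β + 2δ) · A(G) ). -/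
open Matrix BigOperators

lemma det_fromBlocks_scalar {ι : Type*} [Fintype ι] [DecidableEq ι] (a b c e : ℝ) (ha : a ≠ 0) :
    (Matrix.fromBlocks (a • (1 : Matrix ι ι ℝ)) (b • (1 : Matrix ι ι ℝ))
      (c • (1 : Matrix ι ι ℝ)) (e • (1 : Matrix ι ι ℝ))).det
      = (a * e - b * c) ^ Fintype.card ι := by
  have hdetQ : (Matrix.fromBlocks (1 : Matrix ι ι ℝ) 0 ((-(c/a)) • (1 : Matrix ι ι ℝ)) 1).det = 1 := by
    rw [Matrix.det_fromBlocks_zero₁₂]; simp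
  have hprod : (Matrix.fromBlocks (1 : Matrix ι ι ℝ) 0 ((-(c/a)) • (1 : Matrix ι ι ℝ)) 1)
      * (Matrix.fromBlocks (a • (1 : Matrix ι ι ℝ)) (b • (1 : Matrix ι ι ℝ))
      (c • (1 : Matrix ι ι ℝ)) (e • (1 : Matrix ι ι ℝ)))
      = Matrix.fromBlocks (a • (1 : Matrix ι ι ℝ)) (b • (1 : Matrix ι ι ℝ))
          0 ((e - c/a*b) • (1 : Matrix ι ι ℝ)) := by
    rw [Matrix.fromBlocks_multiply]
    have h1 : a • (-(c/a)) • (1 : Matrix ι ι ℝ) + c • (1 : Matrix ι ι ℝ) = 0 := by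
      rw [smul_smul, ← add_smul]
      have hz : a * -(c/a) + c = 0 := by field_simp; ring
      rw [hz, zero_smul]
    have h2 : b • (-(c/a)) • (1 : Matrix ι ι ℝ) + e • (1 : Matrix ι ι ℝ)
        = (e - c/a*b) • (1 : Matrix ι ι ℝ) := by
      rw [smul_smul, ← add_smul]; ring_nf
    simp only [Matrix.one_mul, Matrix.mul_one, Matrix.zero_mul, Matrix.mul_zero,
      Matrix.smul_mul, Matrix.mul_smul, add_zero, zero_add, Matrix.mul_one, smul_zero, h1, h2]
  have := congrArg Matrix.det hprod
  rw [Matrix.det_mul, hdetQ, one_mul, Matrix.det_fromBlocks_zero₂₁] at this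
  rw [this, Matrix.det_smul, Matrix.det_smul, Matrix.det_one, mul_one, mul_one, ← mul_pow]
  congr 1
  field_simp

lemma det_smul_one_sub_smul_invol {ι : Type*} [Fintype ι] [DecidableEq ι]
    (σ : ι ≃ ι) (hinv : ∀ i, σ (σ i) = i) (hfix : ∀ i, σ i ≠ i)
    (a b : ℝ) (ha : a ≠ 0) (m : ℕ) (hm : Fintype.card ι = 2 * m) :
    (a • (1 : Matrix ι ι ℝ) - b • (Matrix.of fun i j => if j = σ i then (1:ℝ) else 0)).det
      = (a ^ 2 - b ^ 2) ^ m := by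
  classical
  let f := Fintype.equivFin ι
  let p : ι → Prop := fun i => f i < f (σ i)
  have hp : ∀ i, ¬ p i ↔ p (σ i) := by
    intro i
    have h2 : p (σ i) ↔ f (σ i) < f i := by
      show f (σ i) < f (σ (σ i)) ↔ _
      rw [hinv i]
    rw [h2]
    constructor
    · intro h
      exact lt_of_le_of_ne (not_lt.1 h) (fun hh => hfix i (f.injective hh))
    · intro h
      exact not_lt.2 (le_of_lt h)
  let ψ : {i // p i} ≃ {i // ¬ p i} :=
    { toFun := fun o => ⟨σ o.val, (hp (σ o.val)).2 (by rw [hinv]; exact o.prop)⟩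
      invFun := fun o => ⟨σ o.val, (hp o.val).1 o.prop⟩
      left_inv := fun o => Subtype.ext (hinv o.val)
      right_inv := fun o => Subtype.ext (hinv o.val) }
  let φ : {i // p i} ⊕ {i // p i} ≃ ι :=
    (Equiv.sumCongr (Equiv.refl _) ψ).trans (Equiv.sumCompl p)
  have hcardO : Fintype.card {i // p i} = m := by
    have h1 : Fintype.card ({i // p i} ⊕ {i // p i}) = Fintype.card ι := Fintype.card_congr φ
    rw [Fintype.card_sum] at h1
    have h2 := h1.trans hm
    omega
  have hval : ∀ (o o' : {i // p i}), ((o.val : ι) = o'.val) ↔ o = o' :=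
    fun o o' => Subtype.ext_iff.symm
  have hA : ∀ (o o' : {i // p i}), σ o'.val ≠ o.val := by
    intro o o' h
    have hnp : ¬ p (σ o'.val) := (hp (σ o'.val)).2 (by rw [hinv]; exact o'.prop)
    rw [h] at hnp
    exact hnp o.prop
  have hB : ∀ (o o' : {i // p i}), (σ o'.val = σ o.val) ↔ o = o' := by
    intro o o'
    constructor
    · intro h
      exact (Subtype.ext (σ.injective h)).symm
    · rintro rfl; rfl
  have hφl : ∀ (o : {i // p i}), φ (Sum.inl o) = o.val := fun o => rfl
  have hφr : ∀ (o : {i // p i}), φ (Sum.inr o) = σ o.val := fun o => rfl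
  have hsub : ((a • (1 : Matrix ι ι ℝ)
        - b • (Matrix.of fun i j => if j = σ i then (1:ℝ) else 0)).submatrix φ φ)
      = Matrix.fromBlocks (a • (1 : Matrix {i // p i} {i // p i} ℝ)) ((-b) • 1) ((-b) • 1) (a • 1) := by
    ext i j
    cases i with
    | inl o =>
      cases j with
      | inl o' =>
        have h1 : ¬ ((o'.val : ι) = σ o.val) := fun h => hA o' o h.symm
        by_cases h : o = o'
        · subst h
          simp [Matrix.submatrix_apply, Matrix.sub_apply, Matrix.smul_apply, Matrix.of_apply,
            Matrix.one_apply, Matrix.fromBlocks_apply₁₁, hφl, hφr, h1]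
        · have h2 : ¬ ((o.val : ι) = o'.val) := fun hh => h (Subtype.ext hh)
          simp [Matrix.submatrix_apply, Matrix.sub_apply, Matrix.smul_apply, Matrix.of_apply,
            Matrix.one_apply, Matrix.fromBlocks_apply₁₁, hφl, hφr, h1, h2, h]
      | inr o' =>
        have h1 : ¬ ((o.val : ι) = σ o'.val) := fun h => hA o o' h.symm
        by_cases h : o = o'
        · subst h
          simp [Matrix.submatrix_apply, Matrix.sub_apply, Matrix.smul_apply, Matrix.of_apply,
            Matrix.one_apply, Matrix.fromBlocks_apply₁₂, hφl, hφr, h1]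
        · have h2 : ¬ (σ (o'.val : ι) = σ o.val) := fun hh => h (Subtype.ext (σ.injective hh)).symm
          simp [Matrix.submatrix_apply, Matrix.sub_apply, Matrix.smul_apply, Matrix.of_apply,
            Matrix.one_apply, Matrix.fromBlocks_apply₁₂, hφl, hφr, h1, h2, h]
    | inr o =>
      cases j with
      | inl o' =>
        have h1 : ¬ (σ (o.val : ι) = o'.val) := hA o' o
        by_cases h : o = o'
        · subst h
          simp [Matrix.submatrix_apply, Matrix.sub_apply, Matrix.smul_apply, Matrix.of_apply,
            Matrix.one_apply, Matrix.fromBlocks_apply₂₁, hφl, hφr, h1, hinv]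
        · have h2 : ¬ ((o'.val : ι) = o.val) := fun hh => h (Subtype.ext hh).symm
          simp [Matrix.submatrix_apply, Matrix.sub_apply, Matrix.smul_apply, Matrix.of_apply,
            Matrix.one_apply, Matrix.fromBlocks_apply₂₁, hφl, hφr, h1, h2, h, hinv]
      | inr o' =>
        have h1 : ¬ (σ (o'.val : ι) = o.val) := hA o o'
        by_cases h : o = o'
        · subst h
          simp [Matrix.submatrix_apply, Matrix.sub_apply, Matrix.smul_apply, Matrix.of_apply,
            Matrix.one_apply, Matrix.fromBlocks_apply₂₂, hφl, hφr, h1, hinv]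
        · have h2 : ¬ (σ (o.val : ι) = σ o'.val) := fun hh => h (Subtype.ext (σ.injective hh))
          simp [Matrix.submatrix_apply, Matrix.sub_apply, Matrix.smul_apply, Matrix.of_apply,
            Matrix.one_apply, Matrix.fromBlocks_apply₂₂, hφl, hφr, h1, h2, h, hinv]
  have hdet := Matrix.det_submatrix_equiv_self φ
    (a • (1 : Matrix ι ι ℝ) - b • (Matrix.of fun i j => if j = σ i then (1:ℝ) else 0))
  rw [hsub] at hdet
  rw [← hdet, det_fromBlocks_scalar a (-b) (-b) a ha, hcardO]
  ring_nf

/-- characteristic polynomial of the Metzler matrix of a regular graph.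
Let `G` be a finite simple connected `d`-regular graph with `N` vertices and `M` edges,
constant rates `β > 0`, `δ > 0`. Then for every real `λ`,
`det(λ I − 𝒜) = ((λ+β+2δ)² − β²)^{M−N} · det({(λ+δ)((λ+β+2δ)² − β²) + dβ²(λ+2δ)} I_N
 − β(λ+2δ)(λ+β+2δ) A(G))`, stated here in the equivalent cleared form
`((λ+β+2δ)² − β²)^N · det(λ I − 𝒜) = ((λ+β+2δ)² − β²)^M · det(⋯)` valid for every `λ`. -/
theorem charpoly_metzler_regular
    {V : Type*} [Fintype V] [DecidableEq V]
    (G : SimpleGraph V) [DecidableRel G.Adj] (hconn : G.Connected)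
    (d : ℕ) (hreg : G.IsRegularOfDegree d)
    (β δ : ℝ) (hβ : 0 < β) (hδ : 0 < δ)
    (K L : Matrix V {e : V × V // G.Adj e.1 e.2} ℝ)
    (hK : ∀ (v : V) (e : {e : V × V // G.Adj e.1 e.2}),
      K v e = if e.val.2 = v then 1 else 0)
    (hL : ∀ (v : V) (e : {e : V × V // G.Adj e.1 e.2}),
      L v e = if e.val.1 = v then 1 else 0)
    (H : Matrix {e : V × V // G.Adj e.1 e.2} {e : V × V // G.Adj e.1 e.2} ℝ)
    (hH : ∀ e f : {e : V × V // G.Adj e.1 e.2},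
      H e f = if e.val.2 = f.val.1 ∧ f.val ≠ arcRev e.val then 1 else 0)
    (𝒜 : Matrix (V ⊕ {e : V × V // G.Adj e.1 e.2})
        (V ⊕ {e : V × V // G.Adj e.1 e.2}) ℝ)
    (h𝒜 : 𝒜 = Matrix.fromBlocks (-(δ • (1 : Matrix V V ℝ))) (β • K)
        (δ • Lᵀ) (β • Hᵀ - (β + 2 * δ) • 1))
    (N M : ℕ) (hN : N = Fintype.card V) (hM : M = G.edgeFinset.card)
    (lam : ℝ) :
    ((lam + β + 2 * δ) ^ 2 - β ^ 2) ^ N * (lam • 1 - 𝒜).det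
      = ((lam + β + 2 * δ) ^ 2 - β ^ 2) ^ M *
        (((lam + δ) * ((lam + β + 2 * δ) ^ 2 - β ^ 2)
            + d * β ^ 2 * (lam + 2 * δ)) • (1 : Matrix V V ℝ)
          - (β * (lam + 2 * δ) * (lam + β + 2 * δ)) • (G.adjMatrix ℝ)).det := by
  classical
  set σ : {e : V × V // G.Adj e.1 e.2} ≃ {e : V × V // G.Adj e.1 e.2} :=
    { toFun := fun e => ⟨arcRev e.val, e.prop.symm⟩
      invFun := fun e => ⟨arcRev e.val, e.prop.symm⟩
      left_inv := fun e => Subtype.ext rfl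
      right_inv := fun e => Subtype.ext rfl } with hσdef
  have hσinv : ∀ e, σ (σ e) = e := fun e => Subtype.ext rfl
  have hσfix : ∀ e, σ e ≠ e := by
    intro e h
    have h1 : (σ e).val.1 = e.val.1 := by rw [h]
    have h2 : (σ e).val.1 = e.val.2 := rfl
    exact G.ne_of_adj e.prop (h2 ▸ h1).symm
  set S : Matrix {e : V × V // G.Adj e.1 e.2} {e : V × V // G.Adj e.1 e.2} ℝ :=
    Matrix.of fun i j => if j = σ i then (1:ℝ) else 0 with hSdef
  have hSapp : ∀ i j, S i j = if j = σ i then (1:ℝ) else 0 := fun i j => rfl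
  have hcardArc : Fintype.card {e : V × V // G.Adj e.1 e.2} = 2 * M := by
    rw [hM, ← SimpleGraph.dart_card_eq_twice_card_edges]
    exact Fintype.card_congr
      ⟨fun e => ⟨e.val, e.prop⟩, fun d => ⟨d.toProd, d.adj⟩,
        fun e => rfl, fun d => rfl⟩
  -- matrix identities
  have hHt : Hᵀ = Lᵀ * K - S := by
    ext e f
    have hsum : (Lᵀ * K) e f = if f.val.2 = e.val.1 then (1:ℝ) else 0 := by
      simp only [Matrix.mul_apply, Matrix.transpose_apply, hL, hK,
        ite_mul, one_mul, zero_mul]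
      rw [Finset.sum_ite_eq Finset.univ e.val.1 (fun v => if f.val.2 = v then (1:ℝ) else 0)]
      simp
    simp only [Matrix.sub_apply, Matrix.transpose_apply, hH, hsum, hSapp]
    by_cases h1 : f = σ e
    · have hval : f.val = arcRev e.val := congrArg Subtype.val h1
      have h2 : f.val.2 = e.val.1 := by rw [hval]; rfl
      have h3 : ¬ (e.val ≠ arcRev f.val) := by
        intro hne
        exact hne (by rw [hval]; rfl)
      rw [if_neg (fun hc => h3 hc.2), if_pos h2, if_pos h1]
      norm_num
    · rw [if_neg h1, sub_zero]
      by_cases h2 : f.val.2 = e.val.1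
      · have h3 : e.val ≠ arcRev f.val := by
          intro hc
          apply h1
          apply Subtype.ext
          show f.val = arcRev e.val
          rw [hc]
          exact (Prod.ext rfl rfl)
        rw [if_pos ⟨h2, h3⟩, if_pos h2]
      · rw [if_neg (fun hc => h2 hc.1), if_neg h2]
  have hKS : K * S = L := by
    ext v f
    rw [Matrix.mul_apply]
    rw [Finset.sum_eq_single (σ f)]
    · rw [hK, hSapp, if_pos (hσinv f).symm, mul_one, hL]
      rfl
    · intro e _ hne
      rw [hSapp, if_neg (fun hc : f = σ e => hne (by rw [hc, hσinv])), mul_zero]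
    · intro h
      exact absurd (Finset.mem_univ _) h
  have hKLt : K * Lᵀ = G.adjMatrix ℝ := by
    ext u v
    rw [Matrix.mul_apply, SimpleGraph.adjMatrix_apply]
    by_cases hadj : G.Adj v u
    · rw [Finset.sum_eq_single (⟨(v, u), hadj⟩ : {e : V × V // G.Adj e.1 e.2})]
      · rw [hK, Matrix.transpose_apply, hL]
        simp [G.adj_symm hadj]
      · intro e _ hne
        rw [hK, Matrix.transpose_apply, hL]
        by_cases h1 : e.val.2 = u
        · by_cases h2 : e.val.1 = v
          · exact absurd (Subtype.ext (Prod.ext h2 h1)) hne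
          · rw [if_neg h2, mul_zero]
        · rw [if_neg h1, zero_mul]
      · intro h
        exact absurd (Finset.mem_univ _) h
    · rw [if_neg (fun h => hadj (G.adj_symm h))]
      apply Finset.sum_eq_zero
      intro e _
      rw [hK, Matrix.transpose_apply, hL]
      by_cases h1 : e.val.2 = u
      · by_cases h2 : e.val.1 = v
        · exact absurd (show G.Adj v u by rw [← h2, ← h1]; exact e.prop) hadj
        · rw [if_neg h2, mul_zero]
      · rw [if_neg h1, zero_mul]
  have hLLt : L * Lᵀ = ((d:ℝ)) • (1 : Matrix V V ℝ) := by
    ext u v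
    rw [Matrix.mul_apply, Matrix.smul_apply, Matrix.one_apply]
    by_cases h : u = v
    · subst h
      have hterm : ∀ e : {e : V × V // G.Adj e.1 e.2},
          L u e * Lᵀ e u = if (e.val.1 = u) then (1:ℝ) else 0 := by
        intro e
        rw [Matrix.transpose_apply, hL]
        by_cases h1 : e.val.1 = u <;> simp [h1]
      rw [Finset.sum_congr rfl (fun e _ => hterm e)]
      have hsubty : (∑ e : {e : V × V // G.Adj e.1 e.2}, if (e.val.1 = u) then (1:ℝ) else 0)
          = ∑ x ∈ Finset.univ.filter (fun p : V × V => G.Adj p.1 p.2),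
              (if x.1 = u then (1:ℝ) else 0) :=
        (Finset.sum_subtype (p := fun p : V × V => G.Adj p.1 p.2)
          (F := inferInstance)
          (Finset.univ.filter (fun p : V × V => G.Adj p.1 p.2))
          (fun x => by simp)
          (fun x => if x.1 = u then (1:ℝ) else 0)).symm
      rw [hsubty, Finset.sum_filter, Fintype.sum_prod_type]
      have hrow : ∀ p1 : V, (∑ p2 : V, if G.Adj p1 p2 then (if p1 = u then (1:ℝ) else 0) else 0)
          = if p1 = u then ((G.degree u : ℝ)) else 0 := by
        intro p1
        by_cases h1 : p1 = u
        · subst h1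
          simp only [eq_self_iff_true, if_true]
          rw [Finset.sum_boole]
          have hnb : G.neighborFinset p1 = Finset.univ.filter (G.Adj p1) := by
            ext w; simp
          rw [SimpleGraph.degree, hnb]
        · simp [h1]
      rw [Finset.sum_congr rfl (fun p1 _ => hrow p1)]
      rw [Finset.sum_ite_eq' Finset.univ u (fun _ => ((G.degree u : ℝ)))]
      simp [hreg u]
    · rw [if_neg h, smul_zero]
      apply Finset.sum_eq_zero
      intro e _
      rw [Matrix.transpose_apply, hL, hL]
      by_cases h1 : e.val.1 = u
      · rw [if_neg (fun h2 : e.val.1 = v => h (h1.symm.trans h2)), mul_zero]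
      · rw [if_neg h1, zero_mul]
  have hSS : S * S = 1 := by
    ext e f
    rw [Matrix.mul_apply]
    rw [Finset.sum_eq_single (σ e)]
    · rw [hSapp, hSapp, if_pos rfl, one_mul, hσinv, Matrix.one_apply]
      by_cases h : f = e
      · rw [if_pos h, if_pos h.symm]
      · rw [if_neg h, if_neg (fun hc => h hc.symm)]
    · intro g _ hne
      rw [hSapp, if_neg hne, zero_mul]
    · intro h
      exact absurd (Finset.mem_univ _) h
  -- generic lambda computation
  have key : ∀ x : ℝ, x + δ ≠ 0 → x + β + 2*δ ≠ 0 → x + 2*δ ≠ 0 → x + 2*β + 2*δ ≠ 0 →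
      ((x + β + 2 * δ) ^ 2 - β ^ 2) ^ N * (x • 1 - 𝒜).det
        = ((x + β + 2 * δ) ^ 2 - β ^ 2) ^ M *
          (((x + δ) * ((x + β + 2 * δ) ^ 2 - β ^ 2)
              + d * β ^ 2 * (x + 2 * δ)) • (1 : Matrix V V ℝ)
            - (β * (x + 2 * δ) * (x + β + 2 * δ)) • (G.adjMatrix ℝ)).det := by
    intro x hx1 ha0 hf1 hf2
    set a : ℝ := x + β + 2*δ with ha
    set P : ℝ := a^2 - β^2 with hP
    have hPfac : P = (x + 2*δ) * (x + 2*β + 2*δ) := by rw [hP, ha]; ring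
    have hPne : P ≠ 0 := hPfac ▸ mul_ne_zero hf1 hf2
    set b : ℝ := β + δ*β/(x+δ) with hb
    set W : Matrix V {e : V × V // G.Adj e.1 e.2} ℝ := (b*a) • K - (b*β) • L with hW
    -- Step 1: block form of x•1 - 𝒜
    have hb11 : x • (1:Matrix V V ℝ) + -(-(δ • (1:Matrix V V ℝ))) = (x+δ) • 1 := by module
    have hb12 : x • (0:Matrix V {e : V × V // G.Adj e.1 e.2} ℝ) + -(β • K) = (-β) • K := by
      module
    have hb21 : x • (0:Matrix {e : V × V // G.Adj e.1 e.2} V ℝ) + -(δ • Lᵀ) = (-δ) • Lᵀ := by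
      module
    have hb22 : x • (1:Matrix {e : V × V // G.Adj e.1 e.2} {e : V × V // G.Adj e.1 e.2} ℝ)
        + -(β • Hᵀ - (β + 2*δ) • 1) = a • 1 - β • Hᵀ := by
      rw [ha]; module
    have hblock : x • (1 : Matrix (V ⊕ {e : V × V // G.Adj e.1 e.2})
          (V ⊕ {e : V × V // G.Adj e.1 e.2}) ℝ) - 𝒜
        = Matrix.fromBlocks ((x+δ) • 1) ((-β) • K) ((-δ) • Lᵀ) (a • 1 - β • Hᵀ) := by
      rw [h𝒜, ← Matrix.fromBlocks_one, Matrix.fromBlocks_smul, sub_eq_add_neg,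
        Matrix.fromBlocks_neg, Matrix.fromBlocks_add, hb11, hb12, hb21, hb22]
    set D2 : Matrix {e : V × V // G.Adj e.1 e.2} {e : V × V // G.Adj e.1 e.2} ℝ :=
      a • 1 - β • Hᵀ - (δ*β/(x+δ)) • (Lᵀ * K) with hD2
    have hQdet : (Matrix.fromBlocks (1 : Matrix V V ℝ) 0 ((δ/(x+δ)) • Lᵀ) 1).det = 1 := by
      rw [Matrix.det_fromBlocks_zero₁₂]; simp
    have hQprod : (Matrix.fromBlocks (1 : Matrix V V ℝ) 0 ((δ/(x+δ)) • Lᵀ) 1)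
        * Matrix.fromBlocks ((x+δ) • 1) ((-β) • K) ((-δ) • Lᵀ) (a • 1 - β • Hᵀ)
        = Matrix.fromBlocks ((x+δ) • 1) ((-β) • K) 0 D2 := by
      rw [Matrix.fromBlocks_multiply]
      have hz1 : ((δ/(x+δ)) • Lᵀ) * ((x+δ) • (1 : Matrix V V ℝ))
          + (1 : Matrix {e : V × V // G.Adj e.1 e.2} {e : V × V // G.Adj e.1 e.2} ℝ) * ((-δ) • Lᵀ)
          = (0 : Matrix {e : V × V // G.Adj e.1 e.2} V ℝ) := by
        simp only [Matrix.smul_mul, Matrix.mul_smul, Matrix.mul_one, Matrix.one_mul, smul_smul]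
        rw [← add_smul]
        have hzz : (x+δ) * (δ/(x+δ)) + -δ = 0 := by field_simp; ring
        rw [hzz, zero_smul]
      have hz2 : ((δ/(x+δ)) • Lᵀ) * ((-β) • K)
          + (1 : Matrix {e : V × V // G.Adj e.1 e.2} {e : V × V // G.Adj e.1 e.2} ℝ) * (a • 1 - β • Hᵀ) = D2 := by
        rw [hD2]
        simp only [Matrix.smul_mul, Matrix.mul_smul, Matrix.one_mul, smul_smul]
        module
      rw [hz1, hz2]
      simp
    have hdet1 : (x • (1 : Matrix (V ⊕ {e : V × V // G.Adj e.1 e.2})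
          (V ⊕ {e : V × V // G.Adj e.1 e.2}) ℝ) - 𝒜).det = (x+δ)^N * D2.det := by
      have h1 := congrArg Matrix.det hQprod
      rw [Matrix.det_mul, hQdet, one_mul, Matrix.det_fromBlocks_zero₂₁, Matrix.det_smul,
        Matrix.det_one, mul_one, ← hN] at h1
      rw [hblock, h1]
    -- Step 2: rewrite D2
    have hD2' : D2 = a • 1 + β • S - b • (Lᵀ * K) := by
      rw [hD2, hHt, hb]; module
    -- Step 3: multiply by a•1 - β•S
    have hmul : (a • 1 + β • S - b • (Lᵀ * K))
        * (a • (1 : Matrix {e : V × V // G.Adj e.1 e.2} {e : V × V // G.Adj e.1 e.2} ℝ) - β • S)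
        = P • 1 - Lᵀ * W := by
      rw [hW]
      simp only [Matrix.sub_mul, Matrix.add_mul, Matrix.mul_sub, Matrix.smul_mul,
        Matrix.mul_smul, Matrix.one_mul, Matrix.mul_one, smul_smul, Matrix.mul_assoc, hKS, hSS]
      rw [hP]
      module
    have hdetS : (a • (1 : Matrix {e : V × V // G.Adj e.1 e.2}
          {e : V × V // G.Adj e.1 e.2} ℝ) - β • S).det = P ^ M := by
      rw [hSdef, det_smul_one_sub_smul_invol σ hσinv hσfix a β ha0 M hcardArc, ← hP]
    have hdet2 : D2.det * P ^ M = (P • (1 : Matrix {e : V × V // G.Adj e.1 e.2}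
          {e : V × V // G.Adj e.1 e.2} ℝ) - Lᵀ * W).det := by
      rw [hD2', ← hdetS, ← Matrix.det_mul, hmul]
    -- Step 4: Weinstein–Aronszajn
    have hsylv : P ^ N * (P • (1 : Matrix {e : V × V // G.Adj e.1 e.2}
          {e : V × V // G.Adj e.1 e.2} ℝ) - Lᵀ * W).det
        = P ^ (2*M) * (P • (1 : Matrix V V ℝ) - W * Lᵀ).det := by
      have hPP : P * -P⁻¹ = -1 := by field_simp
      have e1 : P • (1 : Matrix {e : V × V // G.Adj e.1 e.2}
            {e : V × V // G.Adj e.1 e.2} ℝ) - Lᵀ * W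
          = P • (1 + ((-(P⁻¹)) • Lᵀ) * W) := by
        rw [smul_add, Matrix.smul_mul, smul_smul, hPP, neg_one_smul, sub_eq_add_neg]
      have e2 : P • (1 : Matrix V V ℝ) - W * Lᵀ = P • (1 + W * ((-(P⁻¹)) • Lᵀ)) := by
        rw [smul_add, Matrix.mul_smul, smul_smul, hPP, neg_one_smul, sub_eq_add_neg]
      rw [e1, e2, Matrix.det_smul, Matrix.det_smul,
        Matrix.det_one_add_mul_comm ((-(P⁻¹)) • Lᵀ) W, hcardArc, ← hN]
      ring
    -- Step 5: compute W * Lᵀ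
    have hWL : W * Lᵀ = (b*a) • (G.adjMatrix ℝ) - (b*β*(d:ℝ)) • 1 := by
      rw [hW, Matrix.sub_mul, Matrix.smul_mul, Matrix.smul_mul, hKLt, hLLt, smul_smul]
    -- Step 6: rescale by (x+δ)
    have hscale : (x+δ) • (P • (1 : Matrix V V ℝ) - W * Lᵀ)
        = ((x + δ) * P + d * β ^ 2 * (x + 2 * δ)) • (1 : Matrix V V ℝ)
          - (β * (x + 2 * δ) * a) • (G.adjMatrix ℝ) := by
      rw [hWL]
      have hb1 : (x+δ) * (b*β*(d:ℝ)) = (d:ℝ) * β^2 * (x+2*δ) := by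
        rw [hb]; field_simp; try ring
        try exact Or.inl trivial
      have hb2 : (x+δ) * (b*a) = β * (x+2*δ) * a := by
        rw [hb]; field_simp; try ring
        try exact Or.inl trivial
      simp only [smul_sub, smul_smul]
      rw [hb1, hb2]
      module
    have hdetScale : (((x + δ) * P + d * β ^ 2 * (x + 2 * δ)) • (1 : Matrix V V ℝ)
          - (β * (x + 2 * δ) * a) • (G.adjMatrix ℝ)).det
        = (x+δ)^N * (P • (1 : Matrix V V ℝ) - W * Lᵀ).det := by
      rw [← hscale, Matrix.det_smul, ← hN]
    -- assemble
    rw [hdet1, hdetScale]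
    have hc : P ^ N * D2.det = P ^ M * (P • (1 : Matrix V V ℝ) - W * Lᵀ).det := by
      have h3 : P ^ N * (D2.det * P ^ M)
          = P ^ (2*M) * (P • (1:Matrix V V ℝ) - W * Lᵀ).det := by
        rw [hdet2]; exact hsylv
      rw [two_mul, pow_add] at h3
      have h4 : (P ^ N * D2.det) * P ^ M
          = (P ^ M * (P • (1:Matrix V V ℝ) - W * Lᵀ).det) * P ^ M := by
        linear_combination h3
      exact mul_right_cancel₀ (pow_ne_zero M hPne) h4
    calc P ^ N * ((x+δ)^N * D2.det) = (x+δ)^N * (P ^ N * D2.det) := by ring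
      _ = (x+δ)^N * (P ^ M * (P • (1:Matrix V V ℝ) - W * Lᵀ).det) := by rw [hc]
      _ = P ^ M * ((x+δ)^N * (P • (1:Matrix V V ℝ) - W * Lᵀ).det) := by ring
  -- continuity argument to remove genericity assumptions
  have hbad : Dense (({-δ, -(β+2*δ), -(2*δ), -(2*β+2*δ)} : Set ℝ)ᶜ) :=
    Set.Countable.dense_compl ℝ (Set.toFinite _).countable
  have hf : Continuous fun x : ℝ => ((x + β + 2 * δ) ^ 2 - β ^ 2) ^ N
      * (x • (1 : Matrix (V ⊕ {e : V × V // G.Adj e.1 e.2})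
          (V ⊕ {e : V × V // G.Adj e.1 e.2}) ℝ) - 𝒜).det := by
    apply Continuous.mul
    · fun_prop
    · exact Continuous.matrix_det ((continuous_id.smul continuous_const).sub continuous_const)
  have hg : Continuous fun x : ℝ => ((x + β + 2 * δ) ^ 2 - β ^ 2) ^ M *
      (((x + δ) * ((x + β + 2 * δ) ^ 2 - β ^ 2)
          + d * β ^ 2 * (x + 2 * δ)) • (1 : Matrix V V ℝ)
        - (β * (x + 2 * δ) * (x + β + 2 * δ)) • (G.adjMatrix ℝ)).det := by
    apply Continuous.mul
    · fun_prop
    · apply Continuous.matrix_det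
      apply Continuous.sub
      · exact Continuous.smul (by fun_prop : Continuous fun x : ℝ => (x + δ) * ((x + β + 2 * δ) ^ 2 - β ^ 2)
            + (d:ℝ) * β ^ 2 * (x + 2 * δ)) continuous_const
      · exact Continuous.smul (by fun_prop : Continuous fun x : ℝ => β * (x + 2 * δ) * (x + β + 2 * δ)) continuous_const
  have heq := Continuous.ext_on hbad hf hg (fun x hx => by
    simp only [Set.mem_compl_iff, Set.mem_insert_iff, Set.mem_singleton_iff, not_or] at hx
    obtain ⟨hx1, hx2, hx3, hx4⟩ := hx
    exact key x (fun h => hx1 (by linarith)) (fun h => hx2 (by linarith))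
      (fun h => hx3 (by linarith)) (fun h => hx4 (by linarith)))
  exact congrFun heq lam
end

section
/- (Spectral factorization of the characteristic polynomial of 𝒜.) Let G be a finite simple connected d-regular graph with N vertices and M edges and constant rates β_e = β > 0, δ_v = δ > 0, and let μ₁, …, μ_N be the eigenvalues (with multiplicity) of the adjacency matrix A(G). Then for every λ, det(λ I_{N+2M} − 𝒜) = ( (λ + β + 2δ)² − β² )^{M − N} · ∏_{i=1}^{N} { (λ + δ)((λ + β + 2δ)² − β²) + dβ²(λ + 2δ) − β μ_i (λ + 2δ)(λ + β + 2δ) }. In particular the eigenvalues of 𝒜 are the 3N roots of the cubics (λ + δ)((λ + β + 2δ)² − β²) + dβ²(λ + 2δ) − β μ (λ + 2δ)(λ + β + 2δ) = 0, μ ∈ Spec(A(G)), together with 2(M − N) roots of (λ + β + 2δ)² − β² = 0. -/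
open Matrix BigOperators

open Polynomial

section Ident
variable {V : Type*} [Fintype V] [DecidableEq V]
  {G : SimpleGraph V} [DecidableRel G.Adj]

/-- reversal as a map on arcs -/
def revE (e : {e : V × V // G.Adj e.1 e.2}) : {e : V × V // G.Adj e.1 e.2} :=
  ⟨arcRev e.val, e.prop.symm⟩

lemma revE_revE (e : {e : V × V // G.Adj e.1 e.2}) : revE (revE e) = e := by
  apply Subtype.ext; rfl

/-- the arc-reversal matrix -/
noncomputable def Jmat (G : SimpleGraph V) [DecidableRel G.Adj] :
    Matrix {e : V × V // G.Adj e.1 e.2} {e : V × V // G.Adj e.1 e.2} ℝ :=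
  Matrix.of fun e f => if f = revE e then 1 else 0

lemma Jmat_mul_Jmat : Jmat G * Jmat G = 1 := by
  ext e f
  simp only [Matrix.mul_apply, Jmat, Matrix.of_apply, ite_mul, one_mul, zero_mul,
    Finset.sum_ite_eq', Finset.mem_univ, if_true]
  rw [revE_revE, Matrix.one_apply]
  exact if_congr eq_comm rfl rfl
end Ident

section Ident2
variable {V : Type*} [Fintype V] [DecidableEq V]
  {G : SimpleGraph V} [DecidableRel G.Adj]
  (K L : Matrix V {e : V × V // G.Adj e.1 e.2} ℝ)
  (hK : ∀ (v : V) (e : {e : V × V // G.Adj e.1 e.2}),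
    K v e = if e.val.2 = v then 1 else 0)
  (hL : ∀ (v : V) (e : {e : V × V // G.Adj e.1 e.2}),
    L v e = if e.val.1 = v then 1 else 0)

include hK hL

lemma K_mul_Jmat : K * Jmat G = L := by
  ext v f
  have h1 : ∀ e, K v e * Jmat G e f = if e = revE f then K v e else 0 := by
    intro e
    simp only [Jmat, Matrix.of_apply, mul_ite, mul_one, mul_zero]
    exact if_congr ⟨fun h => by rw [h, revE_revE], fun h => by rw [h, revE_revE]⟩ rfl rfl
  rw [Matrix.mul_apply, Finset.sum_congr rfl fun e _ => h1 e, Finset.sum_ite_eq']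
  simp only [Finset.mem_univ, if_true, hK, hL]
  rfl

lemma LT_mul_K : Lᵀ * K = Matrix.of fun f e : {e : V × V // G.Adj e.1 e.2} =>
    if e.val.2 = f.val.1 then (1 : ℝ) else 0 := by
  ext f e
  rw [Matrix.mul_apply]
  have h1 : ∀ v, Lᵀ f v * K v e = if f.val.1 = v then K v e else 0 := by
    intro v
    rw [Matrix.transpose_apply, hL, ite_mul, one_mul, zero_mul]
  rw [Finset.sum_congr rfl fun v _ => h1 v, Finset.sum_ite_eq]
  simp [hK]

lemma K_mul_LT : K * Lᵀ = G.adjMatrix ℝ := by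
  ext u v
  rw [Matrix.mul_apply]
  by_cases hadj : G.Adj v u
  · have h1 : ∀ e : {e : V × V // G.Adj e.1 e.2},
        K u e * Lᵀ e v = if e = ⟨(v, u), hadj⟩ then 1 else 0 := by
      intro e
      rw [Matrix.transpose_apply, hK, hL]
      by_cases h : e = ⟨(v, u), hadj⟩
      · rw [if_pos h, h]; simp
      · rw [if_neg h]
        have : ¬(e.val.2 = u ∧ e.val.1 = v) := by
          intro ⟨h2, h1'⟩
          exact h (Subtype.ext (Prod.ext h1' h2))
        rcases not_and_or.mp this with h' | h'
        · rw [if_neg h', zero_mul]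
        · rw [if_neg h', mul_zero]
    rw [Finset.sum_congr rfl fun e _ => h1 e, Finset.sum_ite_eq']
    simp [hadj.symm]
  · have h1 : ∀ e : {e : V × V // G.Adj e.1 e.2}, K u e * Lᵀ e v = 0 := by
      intro e
      rw [Matrix.transpose_apply, hK, hL]
      by_cases h2 : e.val.2 = u
      · by_cases h3 : e.val.1 = v
        · exact absurd (h3 ▸ h2 ▸ e.prop) hadj
        · rw [if_neg h3, mul_zero]
      · rw [if_neg h2, zero_mul]
    rw [Finset.sum_congr rfl fun e _ => h1 e, Finset.sum_const_zero]
    have : ¬ G.Adj u v := fun h => hadj h.symm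
    simp [this]

end Ident2

section Ident3
variable {V : Type*} [Fintype V] [DecidableEq V]
  {G : SimpleGraph V} [DecidableRel G.Adj]

lemma L_mul_LT (L : Matrix V {e : V × V // G.Adj e.1 e.2} ℝ)
    (hL : ∀ (v : V) (e : {e : V × V // G.Adj e.1 e.2}),
      L v e = if e.val.1 = v then 1 else 0)
    (d : ℕ) (hreg : G.IsRegularOfDegree d) :
    L * Lᵀ = (d : ℝ) • (1 : Matrix V V ℝ) := by
  ext u v
  rw [Matrix.mul_apply]
  by_cases huv : u = v
  · subst huv
    have h1 : ∀ e : {e : V × V // G.Adj e.1 e.2},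
        L u e * Lᵀ e u = if e.val.1 = u then 1 else 0 := by
      intro e
      rw [Matrix.transpose_apply, hL]
      by_cases h : e.val.1 = u <;> simp [h]
    rw [Finset.sum_congr rfl fun e _ => h1 e, Finset.sum_boole]
    have hcard : (Finset.univ.filter
        fun e : {e : V × V // G.Adj e.1 e.2} => e.val.1 = u).card = G.degree u := by
      rw [← SimpleGraph.card_neighborFinset_eq_degree]
      apply Finset.card_bij (fun e _ => e.val.2)
      · intro e he
        simp only [Finset.mem_filter, Finset.mem_univ, true_and] at he
        rw [SimpleGraph.mem_neighborFinset]
        exact he ▸ e.prop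
      · intro e he f hf h
        simp only [Finset.mem_filter, Finset.mem_univ, true_and] at he hf
        exact Subtype.ext (Prod.ext (he.trans hf.symm) h)
      · intro w hw
        rw [SimpleGraph.mem_neighborFinset] at hw
        exact ⟨⟨(u, w), hw⟩, by simp, rfl⟩
    rw [hcard, hreg u]
    simp
  · have h1 : ∀ e : {e : V × V // G.Adj e.1 e.2}, L u e * Lᵀ e v = 0 := by
      intro e
      rw [Matrix.transpose_apply, hL, hL]
      by_cases h : e.val.1 = u
      · rw [if_neg (fun h2 => huv (h.symm.trans h2)), mul_zero]
      · rw [if_neg h, zero_mul]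
    rw [Finset.sum_congr rfl fun e _ => h1 e, Finset.sum_const_zero]
    simp [Matrix.one_apply_ne huv, huv]

lemma HT_eq (L K : Matrix V {e : V × V // G.Adj e.1 e.2} ℝ)
    (hK : ∀ (v : V) (e : {e : V × V // G.Adj e.1 e.2}),
      K v e = if e.val.2 = v then 1 else 0)
    (hL : ∀ (v : V) (e : {e : V × V // G.Adj e.1 e.2}),
      L v e = if e.val.1 = v then 1 else 0)
    (H : Matrix {e : V × V // G.Adj e.1 e.2} {e : V × V // G.Adj e.1 e.2} ℝ)
    (hH : ∀ e f : {e : V × V // G.Adj e.1 e.2},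
      H e f = if e.val.2 = f.val.1 ∧ f.val ≠ arcRev e.val then 1 else 0) :
    Hᵀ = Lᵀ * K - Jmat G := by
  rw [LT_mul_K K L hK hL]
  ext f e
  rw [Matrix.transpose_apply, hH, Matrix.sub_apply, Matrix.of_apply]
  have hJ : Jmat G f e = if f.val = arcRev e.val then 1 else 0 := by
    simp only [Jmat, Matrix.of_apply]
    apply if_congr _ rfl rfl
    constructor
    · intro h; rw [h]; rfl
    · intro h
      apply Subtype.ext
      show (e : V × V) = arcRev (f : V × V)
      rw [h]
      rfl
  rw [hJ]
  by_cases h1 : e.val.2 = f.val.1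
  · by_cases h2 : f.val = arcRev e.val
    · rw [if_neg (fun hc => hc.2 h2), if_pos h1, if_pos h2]; norm_num
    · rw [if_pos ⟨h1, h2⟩, if_pos h1, if_neg h2]; norm_num
  · have h2 : f.val ≠ arcRev e.val := by
      intro hc
      exact h1 (by rw [hc]; rfl)
    rw [if_neg (fun hc => h1 hc.1), if_neg h1, if_neg h2]
    norm_num

lemma card_arcs (M : ℕ) (hM : M = G.edgeFinset.card) :
    Fintype.card {e : V × V // G.Adj e.1 e.2} = 2 * M := by
  rw [hM, ← SimpleGraph.dart_card_eq_twice_card_edges]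
  apply Fintype.card_congr
  exact ⟨fun e => ⟨e.val, e.prop⟩, fun d => ⟨d.toProd, d.adj⟩,
    fun e => rfl, fun d => rfl⟩

lemma diag_conj [LinearOrder V] :
    Matrix.diagonal (fun e : {e : V × V // G.Adj e.1 e.2} =>
        if e.val.1 < e.val.2 then (1 : ℝ) else -1) * Jmat G
      * Matrix.diagonal (fun e : {e : V × V // G.Adj e.1 e.2} =>
        if e.val.1 < e.val.2 then (1 : ℝ) else -1) = -(Jmat G) := by
  set ε : {e : V × V // G.Adj e.1 e.2} → ℝ :=
    fun e => if e.val.1 < e.val.2 then (1 : ℝ) else -1 with hε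
  ext e f
  rw [Matrix.mul_diagonal, Matrix.diagonal_mul, Matrix.neg_apply]
  simp only [Jmat, Matrix.of_apply]
  by_cases h : f = revE e
  · rw [if_pos h, h]
    have hne := G.ne_of_adj e.prop
    show ε e * 1 * ε (revE e) = -1
    have h1 : (revE e).val.1 = e.val.2 := rfl
    have h2 : (revE e).val.2 = e.val.1 := rfl
    rcases lt_or_gt_of_ne hne with hlt | hgt
    · rw [hε]
      simp only [h1, h2]
      rw [if_pos hlt, if_neg (not_lt.mpr (le_of_lt hlt))]
      norm_num
    · rw [hε]
      simp only [h1, h2]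
      rw [if_neg (not_lt.mpr (le_of_lt hgt)), if_pos hgt]
      norm_num
  · rw [if_neg h]
    norm_num
end Ident3

lemma evalCharpoly {n : Type*} [DecidableEq n] [Fintype n] (B : Matrix n n ℝ) (r : ℝ) :
    (Matrix.charpoly B).eval r = (r • (1 : Matrix n n ℝ) - B).det := by
  rw [Matrix.charpoly, ← Polynomial.coe_evalRingHom, RingHom.map_det]
  congr 1
  ext i j
  by_cases h : i = j <;>
    simp [Matrix.charmatrix_apply, h, Matrix.one_apply, Matrix.diagonal_apply]

lemma det_invol {n : Type*} [DecidableEq n] [Fintype n]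
    (J : Matrix n n ℝ) (hJJ : J * J = 1)
    (D : n → ℝ) (hD : ∀ i, D i = 1 ∨ D i = -1)
    (hDJD : Matrix.diagonal D * J * Matrix.diagonal D = -J)
    (β s : ℝ) (m : ℕ) (hm : Fintype.card n = 2 * m) :
    (s • (1 : Matrix n n ℝ) - β • J).det = (s ^ 2 - β ^ 2) ^ m := by
  have hDD : Matrix.diagonal D * Matrix.diagonal D = 1 := by
    rw [Matrix.diagonal_mul_diagonal]
    convert Matrix.diagonal_one using 2
    ext i
    rcases hD i with h | h <;> simp [h]
  have hdetD : (Matrix.diagonal D).det * (Matrix.diagonal D).det = 1 := by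
    rw [← Matrix.det_mul, hDD, Matrix.det_one]
  have hsym : ∀ r : ℝ, (r • (1 : Matrix n n ℝ) + β • J).det
      = (r • (1 : Matrix n n ℝ) - β • J).det := by
    intro r
    have h1 : Matrix.diagonal D * (r • (1 : Matrix n n ℝ) + β • J) * Matrix.diagonal D
        = r • (1 : Matrix n n ℝ) - β • J := by
      rw [Matrix.mul_add, Matrix.add_mul, Matrix.mul_smul, Matrix.mul_smul,
        Matrix.smul_mul, Matrix.smul_mul, Matrix.mul_one, hDD, hDJD]
      simp [sub_eq_add_neg]
    calc (r • (1 : Matrix n n ℝ) + β • J).det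
        = (Matrix.diagonal D).det * (r • (1 : Matrix n n ℝ) + β • J).det
            * (Matrix.diagonal D).det := by
          rw [mul_comm ((Matrix.diagonal D).det), mul_assoc, hdetD, mul_one]
      _ = (Matrix.diagonal D * (r • (1 : Matrix n n ℝ) + β • J) * Matrix.diagonal D).det := by
          rw [Matrix.det_mul, Matrix.det_mul]
      _ = _ := by rw [h1]
  have hprod : ∀ r : ℝ, (r • (1 : Matrix n n ℝ) - β • J).det
      * (r • (1 : Matrix n n ℝ) - β • J).det = ((r ^ 2 - β ^ 2) ^ m) ^ 2 := by
    intro r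
    have h2 : (r • (1 : Matrix n n ℝ) - β • J) * (r • (1 : Matrix n n ℝ) + β • J)
        = (r ^ 2 - β ^ 2) • (1 : Matrix n n ℝ) := by
      simp only [Matrix.sub_mul, Matrix.mul_add, Matrix.smul_mul, Matrix.mul_smul,
        Matrix.one_mul, Matrix.mul_one, hJJ, smul_smul]
      module
    calc (r • (1 : Matrix n n ℝ) - β • J).det * (r • (1 : Matrix n n ℝ) - β • J).det
        = (r • (1 : Matrix n n ℝ) - β • J).det * (r • (1 : Matrix n n ℝ) + β • J).det := by
          rw [hsym]
      _ = ((r • (1 : Matrix n n ℝ) - β • J) * (r • (1 : Matrix n n ℝ) + β • J)).det := by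
          rw [Matrix.det_mul]
      _ = ((r ^ 2 - β ^ 2) • (1 : Matrix n n ℝ)).det := by rw [h2]
      _ = ((r ^ 2 - β ^ 2) ^ m) ^ 2 := by
          rw [Matrix.det_smul, Matrix.det_one, mul_one, hm, ← pow_mul, mul_comm 2 m, pow_mul]
  -- polynomial argument
  set F : ℝ[X] := Matrix.charpoly (β • J) with hF
  set Gp : ℝ[X] := ((X : ℝ[X]) ^ 2 - C (β ^ 2)) ^ m with hG
  have hFeval : ∀ r : ℝ, F.eval r = (r • (1 : Matrix n n ℝ) - β • J).det := fun r =>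
    evalCharpoly _ r
  have hGeval : ∀ r : ℝ, Gp.eval r = (r ^ 2 - β ^ 2) ^ m := by
    intro r; simp [hG]
  have hFG2 : F * F = Gp * Gp := by
    apply Polynomial.funext
    intro r
    simp only [Polynomial.eval_mul, hFeval, hGeval, hprod r, sq]
  have hGmonic : Gp.Monic := by
    rw [hG]; exact (Polynomial.monic_X_pow_sub_C (β ^ 2) two_ne_zero).pow m
  have hFmonic : F.Monic := Matrix.charpoly_monic _
  have hFGor : F = Gp ∨ F = -Gp := by
    have h0 : (F - Gp) * (F + Gp) = 0 := by linear_combination hFG2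
    rcases mul_eq_zero.mp h0 with h | h
    · exact Or.inl (sub_eq_zero.mp h)
    · exact Or.inr (eq_neg_of_add_eq_zero_left h)
  have hFeqG : F = Gp := by
    rcases hFGor with h | h
    · exact h
    · exfalso
      have h1 : F.leadingCoeff = 1 := hFmonic
      rw [h, Polynomial.leadingCoeff_neg, hGmonic.leadingCoeff] at h1
      norm_num at h1
  rw [← hFeval s, hFeqG, hGeval]


/-- spectral factorization of the characteristic polynomial of `𝒜`.
Let `G` be a finite simple connected `d`-regular graph with `N` vertices and `M` edges,
constant rates `β > 0`, `δ > 0`, and let `μ : V → ℝ` enumerate the eigenvalues (with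
multiplicity) of the adjacency matrix `A(G)`, i.e.
`det(x I − A(G)) = ∏_v (x − μ v)` for all `x`. Then for every `λ`,
`det(λ I − 𝒜) = ((λ+β+2δ)² − β²)^{M−N} ·
 ∏_v {(λ+δ)((λ+β+2δ)² − β²) + dβ²(λ+2δ) − β μ_v (λ+2δ)(λ+β+2δ)}`,
stated here in the equivalent cleared form obtained by multiplying both sides by
`((λ+β+2δ)² − β²)^N`, valid for every `λ`. -/
theorem charpoly_metzler_regular_spectral
    {V : Type*} [Fintype V] [DecidableEq V]
    (G : SimpleGraph V) [DecidableRel G.Adj] (hconn : G.Connected)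
    (d : ℕ) (hreg : G.IsRegularOfDegree d)
    (β δ : ℝ) (hβ : 0 < β) (hδ : 0 < δ)
    (K L : Matrix V {e : V × V // G.Adj e.1 e.2} ℝ)
    (hK : ∀ (v : V) (e : {e : V × V // G.Adj e.1 e.2}),
      K v e = if e.val.2 = v then 1 else 0)
    (hL : ∀ (v : V) (e : {e : V × V // G.Adj e.1 e.2}),
      L v e = if e.val.1 = v then 1 else 0)
    (H : Matrix {e : V × V // G.Adj e.1 e.2} {e : V × V // G.Adj e.1 e.2} ℝ)
    (hH : ∀ e f : {e : V × V // G.Adj e.1 e.2},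
      H e f = if e.val.2 = f.val.1 ∧ f.val ≠ arcRev e.val then 1 else 0)
    (𝒜 : Matrix (V ⊕ {e : V × V // G.Adj e.1 e.2})
        (V ⊕ {e : V × V // G.Adj e.1 e.2}) ℝ)
    (h𝒜 : 𝒜 = Matrix.fromBlocks (-(δ • (1 : Matrix V V ℝ))) (β • K)
        (δ • Lᵀ) (β • Hᵀ - (β + 2 * δ) • 1))
    (N M : ℕ) (hN : N = Fintype.card V) (hM : M = G.edgeFinset.card)
    (μ : V → ℝ)
    (hμ : ∀ x : ℝ, (x • (1 : Matrix V V ℝ) - G.adjMatrix ℝ).det = ∏ v : V, (x - μ v))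
    (lam : ℝ) :
    ((lam + β + 2 * δ) ^ 2 - β ^ 2) ^ N * (lam • 1 - 𝒜).det
      = ((lam + β + 2 * δ) ^ 2 - β ^ 2) ^ M *
        ∏ v : V,
          ((lam + δ) * ((lam + β + 2 * δ) ^ 2 - β ^ 2)
            + d * β ^ 2 * (lam + 2 * δ)
            - β * μ v * (lam + 2 * δ) * (lam + β + 2 * δ)) := by
  letI : LinearOrder V := LinearOrder.lift' (Fintype.equivFin V) (Fintype.equivFin V).injective
  have hJJ : Jmat G * Jmat G = 1 := Jmat_mul_Jmat
  have hKJ : K * Jmat G = L := K_mul_Jmat K L hK hL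
  have hHT : Hᵀ = Lᵀ * K - Jmat G := HT_eq L K hK hL H hH
  have hKL : K * Lᵀ = G.adjMatrix ℝ := K_mul_LT K L hK hL
  have hLL : L * Lᵀ = (d : ℝ) • (1 : Matrix V V ℝ) := L_mul_LT L hL d hreg
  have hcard : Fintype.card {e : V × V // G.Adj e.1 e.2} = 2 * M := card_arcs M hM
  have hεpm : ∀ e : {e : V × V // G.Adj e.1 e.2},
      (if e.val.1 < e.val.2 then (1 : ℝ) else -1) = 1
        ∨ (if e.val.1 < e.val.2 then (1 : ℝ) else -1) = -1 := by
    intro e; by_cases h : e.val.1 < e.val.2 <;> simp [h]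
  have hdetJ : ∀ r : ℝ,
      (r • (1 : Matrix {e : V × V // G.Adj e.1 e.2} {e : V × V // G.Adj e.1 e.2} ℝ)
        - β • Jmat G).det = (r ^ 2 - β ^ 2) ^ M := by
    intro r
    exact det_invol (Jmat G) hJJ _ hεpm diag_conj β r M hcard
  -- the key identity for generic x
  have key : ∀ x : ℝ, x + δ ≠ 0 → x + 2 * δ ≠ 0 → x + β + 2 * δ ≠ 0 →
      (x + β + 2 * δ) ^ 2 - β ^ 2 ≠ 0 →
      ((x + β + 2 * δ) ^ 2 - β ^ 2) ^ N * (x • 1 - 𝒜).det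
        = ((x + β + 2 * δ) ^ 2 - β ^ 2) ^ M *
          ∏ v : V,
            ((x + δ) * ((x + β + 2 * δ) ^ 2 - β ^ 2)
              + d * β ^ 2 * (x + 2 * δ)
              - β * μ v * (x + 2 * δ) * (x + β + 2 * δ)) := by
    intro x hx1 hx3 hx4 hx2
    set s : ℝ := x + β + 2 * δ with hs
    set a : ℝ := s ^ 2 - β ^ 2 with ha
    set c : ℝ := β * (x + 2 * δ) / (x + δ) with hc
    have hcne : c ≠ 0 := div_ne_zero (mul_ne_zero hβ.ne' hx3) hx1
    -- block decomposition of x•1 - 𝒜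
    have hblock : x • (1 : Matrix (V ⊕ {e : V × V // G.Adj e.1 e.2}) _ ℝ) - 𝒜
        = Matrix.fromBlocks ((x + δ) • 1) ((-β) • K) ((-δ) • Lᵀ) (s • 1 - β • Hᵀ) := by
      rw [h𝒜, ← Matrix.fromBlocks_one, Matrix.fromBlocks_smul, sub_eq_add_neg,
        Matrix.fromBlocks_neg, Matrix.fromBlocks_add]
      rw [hs]
      rw [Matrix.fromBlocks_inj]
      refine ⟨by module, by module, by module, by module⟩
    -- Schur complement
    letI : Invertible ((x + δ) • (1 : Matrix V V ℝ)) :=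
      ⟨(x + δ)⁻¹ • 1, by
        rw [Matrix.smul_mul, Matrix.one_mul, smul_smul, inv_mul_cancel₀ hx1, one_smul], by
        rw [Matrix.smul_mul, Matrix.one_mul, smul_smul, mul_inv_cancel₀ hx1, one_smul]⟩
    have hinv : ⅟((x + δ) • (1 : Matrix V V ℝ)) = (x + δ)⁻¹ • 1 := rfl
    have hcomp : (s • 1 - β • Hᵀ) - ((-δ) • Lᵀ) * ⅟((x + δ) • (1 : Matrix V V ℝ))
          * ((-β) • K)
        = s • (1 : Matrix {e : V × V // G.Adj e.1 e.2} _ ℝ) + β • Jmat G - c • (Lᵀ * K) := by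
      rw [hinv, hHT]
      have e1 : ((-δ) • Lᵀ) * ((x + δ)⁻¹ • (1 : Matrix V V ℝ)) * ((-β) • K)
          = (δ * β * (x + δ)⁻¹) • (Lᵀ * K) := by
        simp only [Matrix.smul_mul, Matrix.mul_smul, smul_smul, Matrix.mul_one]
        congr 1
        ring
      rw [e1]
      have hc' : c = β + δ * β * (x + δ)⁻¹ := by
        rw [hc]
        field_simp
        ring
      rw [hc']
      module
    have hdet1 : (x • 1 - 𝒜).det
        = (x + δ) ^ N * (s • 1 + β • Jmat G - c • (Lᵀ * K)).det := by
      rw [hblock, Matrix.det_fromBlocks₁₁, hcomp, Matrix.det_smul, Matrix.det_one,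
        mul_one, hN]
    -- multiply by det(s•1 - β•J)
    have hprodmat : (s • 1 + β • Jmat G - c • (Lᵀ * K)) * (s • 1 - β • Jmat G)
        = a • (1 : Matrix {e : V × V // G.Adj e.1 e.2} _ ℝ)
          - Lᵀ * ((c * s) • K - (c * β) • L) := by
      simp only [Matrix.sub_mul, Matrix.add_mul, Matrix.mul_sub, Matrix.smul_mul,
        Matrix.mul_smul, Matrix.mul_one, Matrix.one_mul, smul_smul, hJJ,
        Matrix.mul_assoc]
      rw [hKJ, ha, hs]
      module
    have hdet2 : (s • 1 + β • Jmat G - c • (Lᵀ * K)).det * a ^ M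
        = ((a • (1 : Matrix {e : V × V // G.Adj e.1 e.2} _ ℝ))
            - Lᵀ * ((c * s) • K - (c * β) • L)).det := by
      rw [← hdetJ s, ← Matrix.det_mul, hprodmat, ha]
    -- reduce to the vertex space
    have hane : a ≠ 0 := hx2
    have hZL : ((c * s) • K - (c * β) • L) * Lᵀ
        = (c * s) • G.adjMatrix ℝ - (c * β * d) • (1 : Matrix V V ℝ) := by
      rw [Matrix.sub_mul, Matrix.smul_mul, Matrix.smul_mul, hKL, hLL, smul_smul]
    have hdet3 : ((a • (1 : Matrix {e : V × V // G.Adj e.1 e.2} _ ℝ))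
          - Lᵀ * ((c * s) • K - (c * β) • L)).det * a ^ N
        = a ^ (2 * M)
          * ((a + c * β * d) • (1 : Matrix V V ℝ) - (c * s) • G.adjMatrix ℝ).det := by
      have hE : (a • (1 : Matrix {e : V × V // G.Adj e.1 e.2} _ ℝ))
            - Lᵀ * ((c * s) • K - (c * β) • L)
          = a • (1 + ((-(a⁻¹)) • Lᵀ) * ((c * s) • K - (c * β) • L)) := by
        rw [Matrix.smul_mul, smul_add, smul_smul,
          show a * -a⁻¹ = -1 by field_simp, neg_one_smul, ← sub_eq_add_neg]
      have hV : ((a + c * β * d) • (1 : Matrix V V ℝ) - (c * s) • G.adjMatrix ℝ)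
          = a • (1 + ((c * s) • K - (c * β) • L) * ((-(a⁻¹)) • Lᵀ)) := by
        rw [Matrix.mul_smul, hZL, smul_add, smul_smul,
          show a * -a⁻¹ = -1 by field_simp, neg_one_smul, ← sub_eq_add_neg]
        module
      rw [hE, hV, Matrix.det_smul, Matrix.det_smul, hcard, ← hN,
        Matrix.det_one_add_mul_comm]
      ring
    -- evaluate the vertex-space determinant
    have hb : c * s ≠ 0 := mul_ne_zero hcne hx4
    have hdet4 : ((a + c * β * d) • (1 : Matrix V V ℝ) - (c * s) • G.adjMatrix ℝ).det
        = ∏ v : V, (a + c * β * d - c * s * μ v) := by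
      have h1 : ((a + c * β * d) • (1 : Matrix V V ℝ) - (c * s) • G.adjMatrix ℝ)
          = (c * s) • (((a + c * β * d) / (c * s)) • 1 - G.adjMatrix ℝ) := by
        rw [smul_sub, smul_smul, mul_div_cancel₀ _ hb]
      rw [h1, Matrix.det_smul, hμ, ← hN, hN, ← Finset.card_univ, ← Finset.prod_const,
        ← Finset.prod_mul_distrib]
      refine Finset.prod_congr rfl fun v _ => ?_
      field_simp
    -- assemble
    have hcomb : (s • 1 + β • Jmat G - c • (Lᵀ * K)).det * a ^ M * a ^ N
        = a ^ (2 * M) * ∏ v : V, (a + c * β * d - c * s * μ v) := by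
      rw [hdet2, hdet3, hdet4]
    have hprod_rel : (∏ v : V,
          ((x + δ) * ((x + β + 2 * δ) ^ 2 - β ^ 2)
            + d * β ^ 2 * (x + 2 * δ)
            - β * μ v * (x + 2 * δ) * (x + β + 2 * δ)))
        = (x + δ) ^ N * ∏ v : V, (a + c * β * d - c * s * μ v) := by
      rw [hN, ← Finset.card_univ, ← Finset.prod_const, ← Finset.prod_mul_distrib]
      refine Finset.prod_congr rfl fun v _ => ?_
      rw [ha, hc, hs]
      field_simp
    have hane' : a ^ M ≠ 0 := pow_ne_zero _ hane
    apply mul_left_cancel₀ hane'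
    rw [hdet1, hprod_rel]
    linear_combination ((x + δ) ^ N : ℝ) * hcomb
  -- polynomial argument to remove the genericity assumptions
  set q1 : ℝ[X] := ((X : ℝ[X]) + C (β + 2 * δ)) ^ 2 - C (β ^ 2) with hq1
  have hq1eval : ∀ r : ℝ, q1.eval r = (r + β + 2 * δ) ^ 2 - β ^ 2 := by
    intro r
    rw [hq1]
    simp only [Polynomial.eval_sub, Polynomial.eval_pow, Polynomial.eval_add,
      Polynomial.eval_X, Polynomial.eval_C]
    ring
  set P : ℝ[X] := q1 ^ N * Matrix.charpoly 𝒜 with hP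
  set Q : ℝ[X] := q1 ^ M * ∏ v : V,
      ((X + C δ) * q1 + C ((d : ℝ) * β ^ 2) * (X + C (2 * δ))
        - C (β * μ v) * (X + C (2 * δ)) * (X + C (β + 2 * δ))) with hQ
  have hPeval : ∀ r : ℝ, P.eval r
      = ((r + β + 2 * δ) ^ 2 - β ^ 2) ^ N * (r • 1 - 𝒜).det := by
    intro r
    rw [hP, Polynomial.eval_mul, Polynomial.eval_pow, hq1eval, evalCharpoly]
  have hQeval : ∀ r : ℝ, Q.eval r
      = ((r + β + 2 * δ) ^ 2 - β ^ 2) ^ M *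
        ∏ v : V,
          ((r + δ) * ((r + β + 2 * δ) ^ 2 - β ^ 2)
            + d * β ^ 2 * (r + 2 * δ)
            - β * μ v * (r + 2 * δ) * (r + β + 2 * δ)) := by
    intro r
    rw [hQ, Polynomial.eval_mul, Polynomial.eval_pow, hq1eval, Polynomial.eval_prod]
    congr 1
    refine Finset.prod_congr rfl fun v _ => ?_
    simp only [Polynomial.eval_sub, Polynomial.eval_add, Polynomial.eval_mul,
      Polynomial.eval_pow, Polynomial.eval_X, Polynomial.eval_C, hq1eval]
    ring
  have hPQ : P = Q := by
    apply Polynomial.eq_of_infinite_eval_eq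
    have hfin : ({-δ, -(2 * δ), -(β + 2 * δ), -(2 * β + 2 * δ)} : Set ℝ).Finite :=
      ((Set.finite_singleton _).insert _).insert _ |>.insert _
    apply (hfin.infinite_compl).mono
    intro y hy
    simp only [Set.mem_compl_iff, Set.mem_insert_iff, Set.mem_singleton_iff, not_or] at hy
    obtain ⟨h1, h2, h3, h4⟩ := hy
    have e1 : y + δ ≠ 0 := fun h => h1 (by linarith)
    have e2 : y + 2 * δ ≠ 0 := fun h => h2 (by linarith)
    have e3 : y + β + 2 * δ ≠ 0 := fun h => h3 (by linarith)
    have e4 : y + 2 * β + 2 * δ ≠ 0 := fun h => h4 (by linarith)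
    have e5 : (y + β + 2 * δ) ^ 2 - β ^ 2 ≠ 0 := by
      have : (y + β + 2 * δ) ^ 2 - β ^ 2 = (y + 2 * δ) * (y + 2 * β + 2 * δ) := by ring
      rw [this]
      exact mul_ne_zero e2 e4
    show P.eval y = Q.eval y
    rw [hPeval, hQeval]
    exact key y e1 e2 e3 e5
  have := congrArg (Polynomial.eval lam) hPQ
  rw [hPeval, hQeval] at this
  exact this
end

section
/- Let G be a finite simple connected d-regular graph with N vertices and M edges satisfying M > N, with constant rates β_e = β > 0 and δ_v = δ > 0. Then every root of the quadratic (λ + β + 2δ)² − β² = 0, i.e. λ = −2δ and λ = −2(β + δ), is an eigenvalue of the Metzler matrix 𝒜 (a root of det(λ I_{N+2M} − 𝒜) = 0). -/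
open Matrix BigOperators

section Aux

variable {V : Type*} [Fintype V] [DecidableEq V]
  (G : SimpleGraph V) [DecidableRel G.Adj]

/-- The arc type of the symmetric digraph of `G`. -/
abbrev Arc := {e : V × V // G.Adj e.1 e.2}

/-- Flip an arc. -/
def arcFlip (e : Arc G) : Arc G := ⟨(e.val.2, e.val.1), e.prop.symm⟩

/-- The underlying edge of an arc, as an element of the edge finset. -/
def edgeOf [Fintype G.edgeSet] (e : Arc G) : ↥G.edgeFinset :=
  ⟨s(e.val.1, e.val.2), by rw [SimpleGraph.mem_edgeFinset]; exact e.prop⟩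

lemma arcFlip_ne_iff (e f : Arc G) : f.val ≠ arcRev e.val ↔ e ≠ arcFlip G f := by
  constructor
  · rintro h rfl
    exact h (by simp [arcFlip, arcRev])
  · intro h hval
    apply h
    apply Subtype.ext
    simp only [arcRev] at hval
    simp [arcFlip, hval]

/-- Key lemma: an appropriately (anti)symmetric flow in the kernel of the terminus
incidence map gives an eigenvector of `𝒜`, so the corresponding `det` vanishes. -/
lemma key_det
    (β δ : ℝ)
    (K L : Matrix V (Arc G) ℝ)
    (hK : ∀ (v : V) (e : Arc G), K v e = if e.val.2 = v then 1 else 0)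
    (H : Matrix (Arc G) (Arc G) ℝ)
    (hH : ∀ e f : Arc G,
      H e f = if e.val.2 = f.val.1 ∧ f.val ≠ arcRev e.val then 1 else 0)
    (𝒜 : Matrix (V ⊕ Arc G) (V ⊕ Arc G) ℝ)
    (h𝒜 : 𝒜 = Matrix.fromBlocks (-(δ • (1 : Matrix V V ℝ))) (β • K)
        (δ • Lᵀ) (β • Hᵀ - (β + 2 * δ) • 1))
    (ε lam : ℝ) (hlam : lam + β + 2 * δ + β * ε = 0)
    (y : Arc G → ℝ) (hy0 : y ≠ 0)
    (hker : ∀ v : V, ∑ e : Arc G, (if e.val.2 = v then y e else 0) = 0)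
    (hsym : ∀ e : Arc G, y (arcFlip G e) = ε * y e) :
    ((lam • (1 : Matrix (V ⊕ Arc G) (V ⊕ Arc G) ℝ)) - 𝒜).det = 0 := by
  rw [← Matrix.exists_mulVec_eq_zero_iff]
  refine ⟨Sum.elim (0 : V → ℝ) y, ?_, ?_⟩
  · intro h0
    exact hy0 (funext fun e => congrFun h0 (Sum.inr e))
  · subst h𝒜
    funext x
    rw [Matrix.mulVec]
    cases x with
    | inl v =>
      show (∑ j, ((lam • (1 : Matrix (V ⊕ Arc G) (V ⊕ Arc G) ℝ))
          - Matrix.fromBlocks (-(δ • (1 : Matrix V V ℝ))) (β • K)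
            (δ • Lᵀ) (β • Hᵀ - (β + 2 * δ) • 1)) (Sum.inl v) j * Sum.elim (0 : V → ℝ) y j) = 0
      rw [Fintype.sum_sum_type]
      have h1 : ∀ u : V, (((lam • (1 : Matrix (V ⊕ Arc G) (V ⊕ Arc G) ℝ))
          - Matrix.fromBlocks (-(δ • (1 : Matrix V V ℝ))) (β • K)
            (δ • Lᵀ) (β • Hᵀ - (β + 2 * δ) • 1)) (Sum.inl v) (Sum.inl u)
          * Sum.elim (0 : V → ℝ) y (Sum.inl u)) = 0 := by
        intro u; simp
      rw [Finset.sum_congr rfl (fun u _ => h1 u), Finset.sum_const_zero, zero_add]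
      have h2 : ∀ e : Arc G, (((lam • (1 : Matrix (V ⊕ Arc G) (V ⊕ Arc G) ℝ))
          - Matrix.fromBlocks (-(δ • (1 : Matrix V V ℝ))) (β • K)
            (δ • Lᵀ) (β • Hᵀ - (β + 2 * δ) • 1)) (Sum.inl v) (Sum.inr e)
          * Sum.elim (0 : V → ℝ) y (Sum.inr e))
          = -β * (if e.val.2 = v then y e else 0) := by
        intro e
        simp only [Matrix.sub_apply, Matrix.smul_apply, smul_eq_mul, Matrix.one_apply,
          Matrix.fromBlocks_apply₁₂, Sum.elim_inr, hK]
        rw [if_neg (by simp : ¬ ((Sum.inl v : V ⊕ Arc G) = Sum.inr e))]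
        split <;> ring
      rw [Finset.sum_congr rfl (fun e _ => h2 e), ← Finset.mul_sum, hker v, mul_zero]
    | inr f =>
      show (∑ j, ((lam • (1 : Matrix (V ⊕ Arc G) (V ⊕ Arc G) ℝ))
          - Matrix.fromBlocks (-(δ • (1 : Matrix V V ℝ))) (β • K)
            (δ • Lᵀ) (β • Hᵀ - (β + 2 * δ) • 1)) (Sum.inr f) j * Sum.elim (0 : V → ℝ) y j) = 0
      rw [Fintype.sum_sum_type]
      have h1 : ∀ u : V, (((lam • (1 : Matrix (V ⊕ Arc G) (V ⊕ Arc G) ℝ))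
          - Matrix.fromBlocks (-(δ • (1 : Matrix V V ℝ))) (β • K)
            (δ • Lᵀ) (β • Hᵀ - (β + 2 * δ) • 1)) (Sum.inr f) (Sum.inl u)
          * Sum.elim (0 : V → ℝ) y (Sum.inl u)) = 0 := by
        intro u; simp
      rw [Finset.sum_congr rfl (fun u _ => h1 u), Finset.sum_const_zero, zero_add]
      have h2 : ∀ e : Arc G, (((lam • (1 : Matrix (V ⊕ Arc G) (V ⊕ Arc G) ℝ))
          - Matrix.fromBlocks (-(δ • (1 : Matrix V V ℝ))) (β • K)
            (δ • Lᵀ) (β • Hᵀ - (β + 2 * δ) • 1)) (Sum.inr f) (Sum.inr e)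
          * Sum.elim (0 : V → ℝ) y (Sum.inr e))
          = (lam + β + 2 * δ) * (if f = e then y e else 0)
            - β * (if e.val.2 = f.val.1 ∧ f.val ≠ arcRev e.val then y e else 0) := by
        intro e
        simp only [Matrix.sub_apply, Matrix.smul_apply, smul_eq_mul, Matrix.one_apply,
          Matrix.fromBlocks_apply₂₂, Sum.elim_inr, Matrix.transpose_apply, hH,
          Sum.inr.injEq]
        by_cases hfe : f = e
        · subst hfe
          have hnc : ¬ ((f.val).2 = (f.val).1 ∧ f.val ≠ arcRev f.val) := by
            rintro ⟨h, -⟩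
            exact G.loopless.irrefl _ (h ▸ f.prop)
          rw [if_pos rfl, if_pos rfl, if_neg hnc, if_neg hnc]
          ring
        · rw [if_neg hfe, if_neg hfe]
          split <;> ring
      have hsplit : (∑ e : Arc G,
          (if e.val.2 = f.val.1 ∧ f.val ≠ arcRev e.val then y e else 0))
          = (∑ e : Arc G, (if e.val.2 = f.val.1 then y e else 0))
            - (∑ e : Arc G, (if e = arcFlip G f then y e else 0)) := by
        rw [← Finset.sum_sub_distrib]
        apply Finset.sum_congr rfl
        intro e _
        by_cases h1 : e = arcFlip G f
        · subst h1
          have hc : ¬ (f.val ≠ arcRev (arcFlip G f).val) := by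
            simp [arcFlip, arcRev]
          have hc2 : (arcFlip G f).val.2 = f.val.1 := rfl
          simp [hc, hc2]
        · have hc : f.val ≠ arcRev e.val := (arcFlip_ne_iff G e f).mpr h1
          simp [hc, h1]
      rw [Finset.sum_congr rfl (fun e _ => h2 e), Finset.sum_sub_distrib,
        ← Finset.mul_sum, ← Finset.mul_sum, Finset.sum_ite_eq, hsplit,
        hker f.val.1, Finset.sum_ite_eq']
      simp only [Finset.mem_univ, if_true]
      rw [hsym f]
      linear_combination y f * hlam
  done

/-- Existence of a nonzero (anti)symmetric flow in the kernel of the terminus map,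
given more edges than vertices. -/
lemma exists_flow (ε : ℝ) (c : V → V → ℝ)
    (hc0 : ∀ a b, G.Adj a b → c a b ≠ 0)
    (hcs : ∀ a b, G.Adj a b → c b a = ε * c a b)
    (hMN : Fintype.card V < G.edgeFinset.card) :
    ∃ y : Arc G → ℝ, y ≠ 0
      ∧ (∀ v : V, ∑ e : Arc G, (if e.val.2 = v then y e else 0) = 0)
      ∧ ∀ e : Arc G, y (arcFlip G e) = ε * y e := by
  classical
  let Φ : (↥G.edgeFinset → ℝ) →ₗ[ℝ] (V → ℝ) :=
    { toFun := fun g v => ∑ e : Arc G,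
        (if e.val.2 = v then c e.val.1 e.val.2 * g (edgeOf G e) else 0)
      map_add' := by
        intro g h
        funext v
        dsimp only [Pi.add_apply]
        rw [← Finset.sum_add_distrib]
        apply Finset.sum_congr rfl
        intro e _
        split <;> simp [mul_add]
      map_smul' := by
        intro r g
        funext v
        simp only [RingHom.id_apply, Pi.smul_apply, smul_eq_mul, Finset.mul_sum]
        apply Finset.sum_congr rfl
        intro e _
        split <;> ring }
  have hninj : ¬ Function.Injective Φ := by
    intro hinj
    have := LinearMap.finrank_le_finrank_of_injective hinj
    rw [Module.finrank_pi, Module.finrank_pi, Fintype.card_coe] at this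
    omega
  have hker : LinearMap.ker Φ ≠ ⊥ := fun h => hninj (LinearMap.ker_eq_bot.mp h)
  obtain ⟨g, hgker, hg0⟩ := (Submodule.ne_bot_iff _).mp hker
  refine ⟨fun e => c e.val.1 e.val.2 * g (edgeOf G e), ?_, ?_, ?_⟩
  · -- nonzero
    obtain ⟨ed, hed⟩ := Function.ne_iff.mp hg0
    have hrep : ∀ s : Sym2 V, ∃ a b, s = s(a, b) := fun s =>
      Sym2.ind (fun a b => ⟨a, b, rfl⟩) s
    obtain ⟨a, b, hab⟩ := hrep ed.val
    have hadj : G.Adj a b := by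
      have h := ed.prop
      rw [SimpleGraph.mem_edgeFinset, hab, SimpleGraph.mem_edgeSet] at h
      exact h
    intro h0
    have h1 := congrFun h0 ⟨(a, b), hadj⟩
    have hedeq : edgeOf G (⟨(a, b), hadj⟩ : Arc G) = ed :=
      Subtype.ext (by simp [edgeOf, hab])
    rw [hedeq] at h1
    simp only [Pi.zero_apply] at h1
    rcases mul_eq_zero.mp h1 with h | h
    · exact hc0 a b hadj h
    · exact hed h
  · -- kernel condition
    intro v
    have := congrFun (LinearMap.mem_ker.mp hgker) v
    simpa [Φ] using this
  · -- symmetry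
    intro e
    have hedge : edgeOf G (arcFlip G e) = edgeOf G e :=
      Subtype.ext (by simp [edgeOf, arcFlip, Sym2.eq_swap])
    show c e.val.2 e.val.1 * g (edgeOf G (arcFlip G e)) = _
    rw [hedge, hcs _ _ e.prop, mul_assoc]

end Aux

/-- Let `G` be a finite simple connected `d`-regular graph with `N`
vertices and `M` edges satisfying `M > N`, with constant rates `β > 0`, `δ > 0`. Then
both roots of `(λ + β + 2δ)² − β² = 0`, namely `λ = −2δ` and `λ = −2(β + δ)`, are
eigenvalues of the Metzler matrix `𝒜`, i.e. roots of `det(λ I − 𝒜) = 0`. -/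
theorem quadratic_roots_are_eigenvalues
    {V : Type*} [Fintype V] [DecidableEq V]
    (G : SimpleGraph V) [DecidableRel G.Adj] (hconn : G.Connected)
    (d : ℕ) (hreg : G.IsRegularOfDegree d)
    (β δ : ℝ) (hβ : 0 < β) (hδ : 0 < δ)
    (K L : Matrix V {e : V × V // G.Adj e.1 e.2} ℝ)
    (hK : ∀ (v : V) (e : {e : V × V // G.Adj e.1 e.2}),
      K v e = if e.val.2 = v then 1 else 0)
    (hL : ∀ (v : V) (e : {e : V × V // G.Adj e.1 e.2}),
      L v e = if e.val.1 = v then 1 else 0)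
    (H : Matrix {e : V × V // G.Adj e.1 e.2} {e : V × V // G.Adj e.1 e.2} ℝ)
    (hH : ∀ e f : {e : V × V // G.Adj e.1 e.2},
      H e f = if e.val.2 = f.val.1 ∧ f.val ≠ arcRev e.val then 1 else 0)
    (𝒜 : Matrix (V ⊕ {e : V × V // G.Adj e.1 e.2})
        (V ⊕ {e : V × V // G.Adj e.1 e.2}) ℝ)
    (h𝒜 : 𝒜 = Matrix.fromBlocks (-(δ • (1 : Matrix V V ℝ))) (β • K)
        (δ • Lᵀ) (β • Hᵀ - (β + 2 * δ) • 1))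
    (hMN : Fintype.card V < G.edgeFinset.card) :
    (((-2 * δ) • (1 : Matrix (V ⊕ {e : V × V // G.Adj e.1 e.2})
        (V ⊕ {e : V × V // G.Adj e.1 e.2}) ℝ) - 𝒜).det = 0)
    ∧ (((-2 * (β + δ)) • (1 : Matrix (V ⊕ {e : V × V // G.Adj e.1 e.2})
        (V ⊕ {e : V × V // G.Adj e.1 e.2}) ℝ) - 𝒜).det = 0) := by
  classical
  constructor
  · -- λ = −2δ, use ε = −1 (antisymmetric flow)
    set φ := (Fintype.equivFin V)
    obtain ⟨y, hy0, hker, hsym⟩ := exists_flow G (-1)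
      (fun a b => if φ a < φ b then 1 else -1)
      (by intro a b _; split <;> norm_num)
      (by
        intro a b hadj
        have hne : φ a ≠ φ b := fun h => hadj.ne (φ.injective h)
        by_cases h : φ a < φ b
        · have h' : ¬ φ b < φ a := asymm h
          simp [h, h']
        · have h' : φ b < φ a := (hne.lt_or_gt).resolve_left h
          simp [h, not_lt.mpr h'.le, h'])
      hMN
    exact key_det G β δ K L hK H hH 𝒜 h𝒜 (-1) (-2 * δ) (by ring) y hy0 hker hsym
  · -- λ = −2(β+δ), use ε = 1 (symmetric flow)
    obtain ⟨y, hy0, hker, hsym⟩ := exists_flow G 1 (fun _ _ => 1)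
      (fun _ _ _ => one_ne_zero) (fun _ _ _ => by ring) hMN
    exact key_det G β δ K L hK H hH 𝒜 h𝒜 1 (-2 * (β + δ)) (by ring) y hy0 hker hsym
end

section
/- (Ihara–Bass determinant identity.) Let G be a finite simple connected graph with N vertices and M edges. Then for every real u, det(I_{2M} − u(B − J₀)) = (1 − u²)^{M − N} · det(I_N − u A(G) + u² (D_G − I_N)), where B, J₀, A(G), D_G are as defined in the context. -/
open Matrix BigOperators

section WA
variable {m n : Type*} [Fintype m] [Fintype n] [DecidableEq m] [DecidableEq n]

lemma wa_identity (P : Matrix m n ℝ) (Q : Matrix n m ℝ) {l : ℝ} (hl : l ≠ 0) :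
    l ^ (Fintype.card n) * (l • (1 : Matrix m m ℝ) - P * Q).det
      = l ^ (Fintype.card m) * (l • (1 : Matrix n n ℝ) - Q * P).det := by
  have hc : l * -l⁻¹ = -1 := by field_simp
  have h1 : l • (1 : Matrix m m ℝ) - P * Q = l • (1 + P * ((-l⁻¹) • Q)) := by
    rw [smul_add, Matrix.mul_smul, smul_smul, hc, neg_one_smul, ← sub_eq_add_neg]
  have h2 : l • (1 : Matrix n n ℝ) - Q * P = l • (1 + ((-l⁻¹) • Q) * P) := by
    rw [smul_add, Matrix.smul_mul, smul_smul, hc, neg_one_smul, ← sub_eq_add_neg]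
  rw [h1, h2, Matrix.det_smul, Matrix.det_smul,
    Matrix.det_one_add_mul_comm P ((-l⁻¹) • Q)]
  ring

end WA

namespace IharaBass

variable {V : Type*} [Fintype V] [DecidableEq V] (G : SimpleGraph V) [DecidableRel G.Adj]

abbrev Arc := {e : V × V // G.Adj e.1 e.2}

def rev (e : Arc G) : Arc G := ⟨(e.val.2, e.val.1), e.prop.symm⟩

@[simp] lemma rev_rev (e : Arc G) : rev G (rev G e) = e := rfl

def S : Matrix V (Arc G) ℝ := Matrix.of fun v e => if e.val.1 = v then 1 else 0
def T : Matrix V (Arc G) ℝ := Matrix.of fun v e => if e.val.2 = v then 1 else 0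

lemma sum_ind (a b : V) :
    (∑ v : V, (if a = v then (1:ℝ) else 0) * (if b = v then 1 else 0))
      = if a = b then 1 else 0 := by
  rw [Finset.sum_eq_single a]
  · simp [eq_comm]
  · intro v _ hv
    simp [Ne.symm hv]
  · simp

lemma TtS (e f : Arc G) :
    ((T G)ᵀ * S G) e f = if e.val.2 = f.val.1 then 1 else 0 := by
  simpa [Matrix.mul_apply, T, S, Matrix.transpose_apply] using sum_ind e.val.2 f.val.1

lemma TtT (e f : Arc G) :
    ((T G)ᵀ * T G) e f = if e.val.2 = f.val.2 then 1 else 0 := by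
  simpa [Matrix.mul_apply, T, Matrix.transpose_apply] using sum_ind e.val.2 f.val.2

lemma StTt : S G * (T G)ᵀ = G.adjMatrix ℝ := by
  ext v w
  rw [Matrix.mul_apply]
  by_cases h : G.Adj v w
  · rw [Finset.sum_eq_single (⟨(v, w), h⟩ : Arc G)]
    · simp [S, T, h]
    · intro e _ he
      simp only [S, T, Matrix.of_apply, Matrix.transpose_apply]
      rcases eq_or_ne e.val.1 v with h1 | h1
      · rcases eq_or_ne e.val.2 w with h2 | h2
        · exact absurd (Subtype.ext (Prod.ext h1 h2)) he
        · simp [h2]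
      · simp [h1]
    · simp
  · rw [Finset.sum_eq_zero, SimpleGraph.adjMatrix_apply, if_neg h]
    intro e _
    simp only [S, T, Matrix.of_apply, Matrix.transpose_apply]
    rcases eq_or_ne e.val.1 v with h1 | h1
    · rcases eq_or_ne e.val.2 w with h2 | h2
      · exact absurd (h1 ▸ h2 ▸ e.prop) h
      · simp [h2]
    · simp [h1]

lemma TTt : T G * (T G)ᵀ = Matrix.diagonal (fun v => (G.degree v : ℝ)) := by
  ext v w
  rw [Matrix.mul_apply]
  rcases eq_or_ne v w with rfl | hvw
  · rw [Matrix.diagonal_apply_eq]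
    have hcard : (Finset.univ.filter (fun e : Arc G => e.val.2 = v)).card
        = G.degree v := by
      rw [← SimpleGraph.card_neighborFinset_eq_degree]
      apply Finset.card_bij (fun e _ => e.val.1)
      · intro e he
        simp only [Finset.mem_filter] at he
        simpa [SimpleGraph.mem_neighborFinset] using (he.2 ▸ e.prop).symm
      · intro e he f hf h
        simp only [Finset.mem_filter] at he hf
        exact Subtype.ext (Prod.ext h (he.2.trans hf.2.symm))
      · intro w hw
        simp only [SimpleGraph.mem_neighborFinset] at hw
        exact ⟨⟨(w, v), hw.symm⟩, by simp, rfl⟩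
    calc (∑ e : Arc G, T G v e * (T G)ᵀ e v)
        = ∑ e : Arc G, (if e.val.2 = v then (1:ℝ) else 0) := by
          apply Finset.sum_congr rfl; intro e _
          simp only [T, Matrix.of_apply, Matrix.transpose_apply]
          by_cases h : e.val.2 = v <;> simp [h]
      _ = ((Finset.univ.filter (fun e : Arc G => e.val.2 = v)).card : ℝ) := by
          rw [Finset.sum_boole]
      _ = (G.degree v : ℝ) := by rw [hcard]
  · rw [Matrix.diagonal_apply_ne _ hvw, Finset.sum_eq_zero]
    intro e _
    simp only [T, Matrix.of_apply, Matrix.transpose_apply]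
    rcases eq_or_ne e.val.2 v with h1 | h1
    · have h2 : e.val.2 ≠ w := by rw [h1]; exact hvw
      simp [h2]
    · simp [h1]

section Orient
variable [LinearOrder V]

abbrev Theta := {e : Arc G // e.val.1 < e.val.2}

def psi : Theta G ⊕ Theta G ≃ Arc G where
  toFun := Sum.elim (fun e => e.val) (fun e => rev G e.val)
  invFun e :=
    if h : e.val.1 < e.val.2 then Sum.inl ⟨e, h⟩
    else Sum.inr ⟨rev G e, lt_of_le_of_ne (not_lt.mp h) (G.ne_of_adj e.prop).symm⟩
  left_inv i := by
    rcases i with e | e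
    · simp [e.prop]
    · have : ¬ (rev G e.val).val.1 < (rev G e.val).val.2 := not_lt.mpr e.prop.le
      simp only [Sum.elim_inr, this, dif_neg, not_false_iff]
      refine (dif_neg this).trans ?_
      congr 1
  right_inv e := by
    by_cases h : e.val.1 < e.val.2 <;> simp [h, rev]
  
lemma card_arc : Fintype.card (Arc G) = 2 * Fintype.card (Theta G) := by
  rw [← Fintype.card_congr (psi G), Fintype.card_sum, two_mul]

lemma card_theta : Fintype.card (Theta G) = G.edgeFinset.card := by
  rw [SimpleGraph.edgeFinset_card]
  apply Fintype.card_of_bijective (f := fun e : Theta G =>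
    (⟨s(e.val.val.1, e.val.val.2), e.val.prop⟩ : G.edgeSet))
  constructor
  · rintro ⟨⟨⟨a, b⟩, hab⟩, h1⟩ ⟨⟨⟨c, d⟩, hcd⟩, h2⟩ h
    simp only [Subtype.mk.injEq, Sym2.eq_iff] at h ⊢
    replace h := Sym2.eq_iff.mp (congrArg Subtype.val h)
    rcases h with ⟨rfl, rfl⟩ | ⟨rfl, rfl⟩
    · rfl
    · exact absurd (h1.trans h2) (lt_irrefl _)
  · rintro ⟨x, hx⟩
    induction x with
    | _ a b =>
      rcases (Ne.lt_or_gt (G.ne_of_adj hx)) with h | h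
      · exact ⟨⟨⟨(a, b), hx⟩, h⟩, rfl⟩
      · exact ⟨⟨⟨(b, a), hx.symm⟩, h⟩, by simp [Sym2.eq_swap]⟩

lemma det_one_sub_smul_J0 (J0 : Matrix (Arc G) (Arc G) ℝ)
    (hJ0 : ∀ e f : Arc G, J0 e f = if f.val = arcRev e.val then 1 else 0) (u : ℝ) :
    (1 - u • J0).det = (1 - u ^ 2) ^ (Fintype.card (Theta G)) := by
  have hsub : (1 - u • J0).submatrix (psi G) (psi G)
      = Matrix.fromBlocks 1 ((-u) • 1) ((-u) • 1) 1 := by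
    ext i j
    rcases i with e | e <;> rcases j with f | f <;>
      simp only [Matrix.submatrix_apply, psi, Equiv.coe_fn_mk, Sum.elim_inl, Sum.elim_inr,
        Matrix.sub_apply, Matrix.smul_apply, Matrix.one_apply, hJ0,
        Matrix.fromBlocks_apply₁₁, Matrix.fromBlocks_apply₁₂,
        Matrix.fromBlocks_apply₂₁, Matrix.fromBlocks_apply₂₂, smul_eq_mul]
    · -- inl inl
      rcases e with ⟨⟨⟨a, b⟩, hab⟩, h1⟩
      rcases f with ⟨⟨⟨c, d⟩, hcd⟩, h2⟩
      have hJ : ¬(((c, d) : V × V) = arcRev (a, b)) := by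
        rintro h
        rw [arcRev, Prod.mk.injEq] at h
        obtain ⟨rfl, rfl⟩ := h
        exact absurd h2 h1.asymm
      rw [if_neg hJ]
      simp [Subtype.ext_iff]
    · -- inl inr
      rcases e with ⟨⟨⟨a, b⟩, hab⟩, h1⟩
      rcases f with ⟨⟨⟨c, d⟩, hcd⟩, h2⟩
      have hI : ¬((⟨(a, b), hab⟩ : Arc G) = rev G ⟨(c, d), hcd⟩) := by
        rintro h
        rw [Subtype.ext_iff] at h
        rw [rev] at h
        rw [Prod.mk.injEq] at h
        obtain ⟨rfl, rfl⟩ := h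
        exact absurd h2 h1.asymm
      rw [if_neg hI]
      have hJ : ((rev G ⟨(c, d), hcd⟩ : Arc G) : V × V) = arcRev (a, b)
          ↔ (⟨⟨(a, b), hab⟩, h1⟩ : Theta G) = ⟨⟨(c, d), hcd⟩, h2⟩ := by
        rw [rev, arcRev]
        simp only [Subtype.mk.injEq, Prod.mk.injEq]
        constructor
        · rintro ⟨rfl, rfl⟩; exact ⟨rfl, rfl⟩
        · rintro ⟨rfl, rfl⟩; exact ⟨rfl, rfl⟩
      by_cases h : (⟨⟨(a, b), hab⟩, h1⟩ : Theta G) = ⟨⟨(c, d), hcd⟩, h2⟩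
      · rw [if_pos (hJ.mpr h), if_pos h]; ring
      · rw [if_neg (fun hh => h (hJ.mp hh)), if_neg h]; ring
    · -- inr inl
      rcases e with ⟨⟨⟨a, b⟩, hab⟩, h1⟩
      rcases f with ⟨⟨⟨c, d⟩, hcd⟩, h2⟩
      have hI : ¬((rev G ⟨(a, b), hab⟩ : Arc G) = ⟨(c, d), hcd⟩) := by
        rintro h
        rw [Subtype.ext_iff, rev, Prod.mk.injEq] at h
        obtain ⟨rfl, rfl⟩ := h
        exact absurd h2 h1.asymm
      rw [if_neg hI]
      have hJ : (((c, d) : V × V) = arcRev ((rev G ⟨(a, b), hab⟩ : Arc G) : V × V))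
          ↔ (⟨⟨(a, b), hab⟩, h1⟩ : Theta G) = ⟨⟨(c, d), hcd⟩, h2⟩ := by
        rw [rev, arcRev]
        simp only [Subtype.mk.injEq, Prod.mk.injEq]
        constructor
        · rintro ⟨rfl, rfl⟩; exact ⟨rfl, rfl⟩
        · rintro ⟨rfl, rfl⟩; exact ⟨rfl, rfl⟩
      by_cases h : (⟨⟨(a, b), hab⟩, h1⟩ : Theta G) = ⟨⟨(c, d), hcd⟩, h2⟩
      · rw [if_pos (hJ.mpr h), if_pos h]; ring
      · rw [if_neg (fun hh => h (hJ.mp hh)), if_neg h]; ring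
    · -- inr inr
      rcases e with ⟨⟨⟨a, b⟩, hab⟩, h1⟩
      rcases f with ⟨⟨⟨c, d⟩, hcd⟩, h2⟩
      have hJ : ¬(((rev G ⟨(c, d), hcd⟩ : Arc G) : V × V)
          = arcRev ((rev G ⟨(a, b), hab⟩ : Arc G) : V × V)) := by
        rintro h
        rw [rev, rev, arcRev] at h
        rw [Prod.mk.injEq] at h
        obtain ⟨rfl, rfl⟩ := h
        exact absurd h2 h1.asymm
      rw [if_neg hJ]
      have hI : ((rev G ⟨(a, b), hab⟩ : Arc G) = rev G ⟨(c, d), hcd⟩)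
          ↔ (⟨⟨(a, b), hab⟩, h1⟩ : Theta G) = ⟨⟨(c, d), hcd⟩, h2⟩ := by
        rw [Subtype.ext_iff, rev, rev]
        simp only [Subtype.mk.injEq, Prod.mk.injEq]
        constructor
        · rintro ⟨rfl, rfl⟩; exact ⟨rfl, rfl⟩
        · rintro ⟨rfl, rfl⟩; exact ⟨rfl, rfl⟩
      by_cases h : (⟨⟨(a, b), hab⟩, h1⟩ : Theta G) = ⟨⟨(c, d), hcd⟩, h2⟩
      · rw [if_pos (hI.mpr h), if_pos h]; ring
      · rw [if_neg (fun hh => h (hI.mp hh)), if_neg h]; ring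
  have := Matrix.det_submatrix_equiv_self (psi G) (1 - u • J0)
  rw [← this, hsub, Matrix.det_fromBlocks_one₁₁]
  have : (1 : Matrix (Theta G) (Theta G) ℝ) - ((-u) • 1) * ((-u) • 1)
      = (1 - u ^ 2) • 1 := by
    rw [Matrix.smul_mul, Matrix.mul_smul, one_mul, smul_smul, sub_smul, one_smul]
    ring_nf
  rw [this, Matrix.det_smul, Matrix.det_one, mul_one]

end Orient
end IharaBass

/-- Ihara–Bass determinant identity. Let `G` be a finite simple
connected graph with `N` vertices and `M` edges, with arc set `D(G)` of cardinality
`2M`, `B` the arc-adjacency matrix (`B_{ef} = 1` iff `t(e) = o(f)`) and `J₀` the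
inverse-arc matrix. Then for every real `u`,
`det(I_{2M} − u(B − J₀)) = (1 − u²)^{M−N} · det(I_N − u A(G) + u²(D_G − I_N))`,
stated here in the equivalent cleared form
`(1 − u²)^N · det(I_{2M} − u(B − J₀)) = (1 − u²)^M · det(⋯)` valid for every real `u`. -/
theorem ihara_bass
    {V : Type*} [Fintype V] [DecidableEq V]
    (G : SimpleGraph V) [DecidableRel G.Adj] (hconn : G.Connected)
    (B J0 : Matrix {e : V × V // G.Adj e.1 e.2} {e : V × V // G.Adj e.1 e.2} ℝ)
    (hB : ∀ e f : {e : V × V // G.Adj e.1 e.2},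
      B e f = if e.val.2 = f.val.1 then 1 else 0)
    (hJ0 : ∀ e f : {e : V × V // G.Adj e.1 e.2},
      J0 e f = if f.val = arcRev e.val then 1 else 0)
    (N M : ℕ) (hN : N = Fintype.card V) (hM : M = G.edgeFinset.card)
    (u : ℝ) :
    (1 - u ^ 2) ^ N * (1 - u • (B - J0)).det
      = (1 - u ^ 2) ^ M *
        ((1 : Matrix V V ℝ) - u • G.adjMatrix ℝ
          + (u ^ 2) • (Matrix.diagonal (fun v => (G.degree v : ℝ)) - 1)).det := by
  classical
  letI : LinearOrder V :=
    LinearOrder.lift' (Fintype.equivFin V) (Fintype.equivFin V).injective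
  have hNe : Nonempty V := hconn.nonempty
  have hN1 : N ≠ 0 := by rw [hN]; exact Fintype.card_ne_zero
  by_cases hu : (1 : ℝ) - u ^ 2 = 0
  · -- degenerate case u = ±1
    rw [hu, zero_pow hN1]
    rcases Nat.eq_zero_or_pos M with hM0 | hMpos
    · -- no edges: the RHS determinant vanishes
      have hadj : ∀ v w : V, ¬ G.Adj v w := by
        intro v w hvw
        have hm : s(v, w) ∈ G.edgeFinset := by
          rw [SimpleGraph.mem_edgeFinset]; exact hvw
        have : G.edgeFinset.card ≠ 0 := Finset.card_ne_zero_of_mem hm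
        rw [← hM, hM0] at this
        exact this rfl
      rw [hM0, pow_zero, one_mul, zero_mul]
      have h1 : G.adjMatrix ℝ = 0 := by
        ext v w; simp [hadj v w]
      have h2 : (Matrix.diagonal (fun v => ((G.degree v : ℝ)))) = 0 := by
        have hd : ∀ v : V, G.degree v = 0 := by
          intro v
          rw [← SimpleGraph.card_neighborFinset_eq_degree, Finset.card_eq_zero]
          ext w
          simp [SimpleGraph.mem_neighborFinset, hadj v w]
        ext v w
        by_cases h : v = w <;> simp [h, hd]
      have hFbot : ((1 : Matrix V V ℝ) - u • G.adjMatrix ℝ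
          + (u ^ 2) • (Matrix.diagonal (fun v => ((G.degree v : ℝ))) - 1))
          = ((1 : ℝ) - u ^ 2) • 1 := by
        rw [h1, h2, smul_zero, sub_zero, zero_sub, smul_neg, sub_smul, one_smul,
          ← sub_eq_add_neg]
      rw [hFbot, Matrix.det_smul, hu, Matrix.det_one, mul_one,
        zero_pow Fintype.card_ne_zero]
    · rw [zero_pow hMpos.ne']
      simp
  · -- main case: 1 - u² ≠ 0
    have hBTS : B = (IharaBass.T G)ᵀ * IharaBass.S G := by
      ext e f; rw [hB, IharaBass.TtS]
    have hJ0'' : ∀ e f : {e : V × V // G.Adj e.1 e.2},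
        J0 e f = if e = IharaBass.rev G f then 1 else 0 := by
      intro e f
      rw [hJ0]
      congr 1
      simp only [eq_iff_iff]
      constructor
      · intro h
        apply Subtype.ext
        show e.val = arcRev f.val
        rw [h]
        rfl
      · intro h
        rw [h]
        rfl
    have hJ0J0 : J0 * J0 = 1 := by
      ext e g
      rw [Matrix.mul_apply]
      calc (∑ f, J0 e f * J0 f g)
          = ∑ f, (if f = IharaBass.rev G e then J0 f g else 0) := by
            apply Finset.sum_congr rfl
            intro f _
            rw [hJ0'' e f]
            by_cases h : e = IharaBass.rev G f
            · rw [if_pos h, if_pos (by rw [h]; rfl), one_mul]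
            · rw [if_neg h, if_neg (fun hf => h (by rw [hf]; rfl)), zero_mul]
        _ = J0 (IharaBass.rev G e) g := by
            rw [Finset.sum_ite_eq' Finset.univ (IharaBass.rev G e) (fun f => J0 f g),
              if_pos (Finset.mem_univ _)]
        _ = (1 : Matrix _ _ ℝ) e g := by
            rw [hJ0'' _ g, Matrix.one_apply]
            congr 1
            simp only [eq_iff_iff]
            constructor
            · intro h
              have h2 := congrArg (IharaBass.rev G) h
              rwa [IharaBass.rev_rev, IharaBass.rev_rev] at h2
            · rintro rfl
              rfl
    have hBJ0 : B * J0 = (IharaBass.T G)ᵀ * IharaBass.T G := by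
      ext e g
      rw [Matrix.mul_apply]
      calc (∑ f, B e f * J0 f g)
          = ∑ f, (if f = IharaBass.rev G g then B e f else 0) := by
            apply Finset.sum_congr rfl
            intro f _
            rw [hJ0'' f g]
            by_cases h : f = IharaBass.rev G g
            · rw [if_pos h, if_pos h, mul_one]
            · rw [if_neg h, if_neg h, mul_zero]
        _ = B e (IharaBass.rev G g) := by
            rw [Finset.sum_ite_eq' Finset.univ (IharaBass.rev G g) (fun f => B e f),
              if_pos (Finset.mem_univ _)]
        _ = ((IharaBass.T G)ᵀ * IharaBass.T G) e g := by
            rw [hB, IharaBass.TtT]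
            rfl
    -- the key algebraic identity
    have key : (1 - u • (B - J0)) * (1 - u • J0)
        = ((1 : ℝ) - u ^ 2) • 1
          - (IharaBass.T G)ᵀ * (u • IharaBass.S G - (u ^ 2) • IharaBass.T G) := by
      rw [Matrix.mul_sub ((IharaBass.T G)ᵀ), Matrix.mul_smul, Matrix.mul_smul,
        ← hBTS, ← hBJ0]
      simp only [Matrix.sub_mul, Matrix.mul_sub, Matrix.mul_one, Matrix.one_mul,
        smul_mul_assoc, mul_smul_comm, smul_smul, smul_sub, hJ0J0]
      module
    have detmul : (1 - u • (B - J0)).det * (1 - u • J0).det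
        = (((1 : ℝ) - u ^ 2) • 1
            - (IharaBass.T G)ᵀ * (u • IharaBass.S G - (u ^ 2) • IharaBass.T G)).det := by
      rw [← Matrix.det_mul, key]
    have detJ := IharaBass.det_one_sub_smul_J0 G J0 hJ0 u
    have hMth : Fintype.card (IharaBass.Theta G) = M := by
      rw [IharaBass.card_theta, hM]
    have hcardArc : Fintype.card (IharaBass.Arc G) = 2 * M := by
      rw [IharaBass.card_arc, hMth]
    have wa := wa_identity ((IharaBass.T G)ᵀ)
      (u • IharaBass.S G - (u ^ 2) • IharaBass.T G) hu
    have hF : ((1 : ℝ) - u ^ 2) • (1 : Matrix V V ℝ)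
        - (u • IharaBass.S G - (u ^ 2) • IharaBass.T G) * (IharaBass.T G)ᵀ
        = (1 : Matrix V V ℝ) - u • G.adjMatrix ℝ
          + (u ^ 2) • (Matrix.diagonal (fun v => (G.degree v : ℝ)) - 1) := by
      rw [Matrix.sub_mul, Matrix.smul_mul, Matrix.smul_mul, IharaBass.StTt,
        IharaBass.TTt]
      module
    rw [hF] at wa
    have final : ((1 - u ^ 2) ^ N * (1 - u • (B - J0)).det) * (1 - u ^ 2) ^ M
        = ((1 - u ^ 2) ^ M *
            ((1 : Matrix V V ℝ) - u • G.adjMatrix ℝ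
              + (u ^ 2) • (Matrix.diagonal (fun v => (G.degree v : ℝ)) - 1)).det)
          * (1 - u ^ 2) ^ M := by
      calc ((1 - u ^ 2) ^ N * (1 - u • (B - J0)).det) * (1 - u ^ 2) ^ M
          = (1 - u ^ 2) ^ N * ((1 - u • (B - J0)).det * (1 - u • J0).det) := by
            rw [detJ, hMth]; ring
        _ = (1 - u ^ 2) ^ (Fintype.card V) *
              (((1 : ℝ) - u ^ 2) • 1
                - (IharaBass.T G)ᵀ *
                    (u • IharaBass.S G - (u ^ 2) • IharaBass.T G)).det := by
            rw [detmul, hN]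
        _ = (1 - u ^ 2) ^ (Fintype.card (IharaBass.Arc G)) *
              ((1 : Matrix V V ℝ) - u • G.adjMatrix ℝ
                + (u ^ 2) • (Matrix.diagonal (fun v => (G.degree v : ℝ)) - 1)).det := wa
        _ = _ := by
            rw [hcardArc, two_mul, pow_add]; ring
    exact mul_right_cancel₀ (pow_ne_zero M hu) final
end
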